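/- arXiv:2210.13045 — 10 statements merged into one kernel-verified Lean document; each statement's English description precedes it below -/
import Mathlib

section
/- Let R be a principal ideal domain in which 2 ≠ 0, let Δ, π, μ ∈ R satisfy Δ = π² + 4μ, and let S_ω := R[ω]/⟨ω² + πω − μ⟩. Let [a₁,b₁,c₁] and [a₂,b₂,c₂] be primitive binary quadratic forms over R of discriminant Δ (i.e. b₁² − 4a₁c₁ = Δ = b₂² − 4a₂c₂) with b₁ ≡ π (mod 2R) and b₂ ≡ π (mod 2R), suppose a₁ and a₂ are nonzero and coprime, and let r₁, r₂ ∈ R satisfy a₁r₁ + a₂r₂ = 1. Set B := a₁r₁b₂ + a₂r₂b₁ (note B ≡ π mod 2R). Then 4a₁a₂ divides B² − Δ in R, and in S_ω the product of ideals ⟨a₁, ω + (π−b₁)/2⟩ · ⟨a₂, ω + (π−b₂)/2⟩ equals ⟨a₁a₂, ω + (π−B)/2⟩ (this realizes the Dirichlet composition of the two forms). -/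
open Polynomial

/-- **Dirichlet composition at the level of ideals of the quadratic algebra.**
`R` is a PID with `2 ≠ 0`, `Δ = π² + 4μ`, and `S_ω := R[ω]/⟨ω² + πω − μ⟩`.
Given primitive forms `[a₁,b₁,c₁]`, `[a₂,b₂,c₂]` of discriminant `Δ` with
`bᵢ ≡ π (mod 2R)`, `a₁, a₂` nonzero with a Bézout relation `a₁r₁ + a₂r₂ = 1`,
and `B := a₁r₁b₂ + a₂r₂b₁`, then `4a₁a₂ ∣ B² − Δ` and
`⟨a₁, ω + (π−b₁)/2⟩ · ⟨a₂, ω + (π−b₂)/2⟩ = ⟨a₁a₂, ω + (π−B)/2⟩` in `S_ω`. -/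
theorem dirichlet_composition_ideals
    (R : Type*) [CommRing R] [IsDomain R] [IsPrincipalIdealRing R]
    (h2 : (2 : R) ≠ 0)
    (Δ π μ : R) (hΔ : Δ = π ^ 2 + 4 * μ)
    (a₁ b₁ c₁ a₂ b₂ c₂ r₁ r₂ B e₁ e₂ : R)
    (hprim₁ : Ideal.span {a₁, b₁, c₁} = (⊤ : Ideal R))
    (hprim₂ : Ideal.span {a₂, b₂, c₂} = (⊤ : Ideal R))
    (hdisc₁ : b₁ ^ 2 - 4 * a₁ * c₁ = Δ)
    (hdisc₂ : b₂ ^ 2 - 4 * a₂ * c₂ = Δ)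
    (ha₁ : a₁ ≠ 0) (ha₂ : a₂ ≠ 0)
    (hbezout : a₁ * r₁ + a₂ * r₂ = 1)
    (he₁ : π - b₁ = 2 * e₁) (he₂ : π - b₂ = 2 * e₂)
    (hB : B = a₁ * r₁ * b₂ + a₂ * r₂ * b₁) :
    (4 * (a₁ * a₂)) ∣ (B ^ 2 - Δ) ∧
    ∀ eB : R, π - B = 2 * eB →
      (letI Sω := R[X] ⧸ Ideal.span {(X : R[X]) ^ 2 + C π * X - C μ}
       letI mk : R[X] →+* Sω := Ideal.Quotient.mk _
       (Ideal.span {mk (C a₁), mk (X + C e₁)}) *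
         (Ideal.span {mk (C a₂), mk (X + C e₂)}) =
       Ideal.span {mk (C (a₁ * a₂)), mk (X + C eB)}) := by
  have h4 : (4 : R) ≠ 0 := by
    intro h; apply h2
    have : (2:R) * 2 = 2 * 0 := by rw [mul_zero]; linear_combination h
    exact mul_left_cancel₀ h2 this
  have hπB : π - B = 2 * (a₁ * r₁ * e₂ + a₂ * r₂ * e₁) := by
    linear_combination a₁ * r₁ * he₂ + a₂ * r₂ * he₁ - π * hbezout - hB
  have ge₁ : e₁ ^ 2 - π * e₁ - μ = a₁ * c₁ := by
    apply mul_left_cancel₀ h4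
    linear_combination hdisc₁ + hΔ + (b₁ + π - 2*e₁) * he₁
  have ge₂ : e₂ ^ 2 - π * e₂ - μ = a₂ * c₂ := by
    apply mul_left_cancel₀ h4
    linear_combination hdisc₂ + hΔ + (b₂ + π - 2*e₂) * he₂
  have hga₁ : a₁ ∣ (a₁ * r₁ * e₂ + a₂ * r₂ * e₁) ^ 2
      - π * (a₁ * r₁ * e₂ + a₂ * r₂ * e₁) - μ :=
    ⟨r₁ * (e₂ - e₁) * ((a₁ * r₁ * e₂ + a₂ * r₂ * e₁) + e₁ - π) + c₁, by
      linear_combination ge₁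
        + e₁ * ((a₁ * r₁ * e₂ + a₂ * r₂ * e₁) + e₁ - π) * hbezout⟩
  have hga₂ : a₂ ∣ (a₁ * r₁ * e₂ + a₂ * r₂ * e₁) ^ 2
      - π * (a₁ * r₁ * e₂ + a₂ * r₂ * e₁) - μ :=
    ⟨r₂ * (e₁ - e₂) * ((a₁ * r₁ * e₂ + a₂ * r₂ * e₁) + e₂ - π) + c₂, by
      linear_combination ge₂
        + e₂ * ((a₁ * r₁ * e₂ + a₂ * r₂ * e₁) + e₂ - π) * hbezout⟩
  have hcop : IsCoprime a₁ a₂ := ⟨r₁, r₂, by linear_combination hbezout⟩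
  obtain ⟨k, hk⟩ := hcop.mul_dvd hga₁ hga₂
  constructor
  · exact ⟨k, by
      linear_combination 4 * hk - hΔ
        - (B + π - 2 * (a₁ * r₁ * e₂ + a₂ * r₂ * e₁)) * hπB⟩
  · intro eB heB
    have heB' : eB = a₁ * r₁ * e₂ + a₂ * r₂ * e₁ :=
      mul_left_cancel₀ h2 (by linear_combination hπB - heB)
    set I : Ideal R[X] := Ideal.span {(X : R[X]) ^ 2 + C π * X - C μ} with hI
    set mk : R[X] →+* R[X] ⧸ I := Ideal.Quotient.mk I with hmk
    show Ideal.span {mk (C a₁), mk (X + C e₁)} *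
        Ideal.span {mk (C a₂), mk (X + C e₂)} =
        Ideal.span {mk (C (a₁ * a₂)), mk (X + C eB)}
    have hC : (C a₁ * C r₁ + C a₂ * C r₂ : R[X]) = 1 := by
      rw [← C_mul, ← C_mul, ← C_add, hbezout, map_one]
    have p1 : (C a₁ * C a₂ : R[X]) = C (a₁ * a₂) := by rw [C_mul]
    have p2 : (C a₁ * (X + C e₂) : R[X]) =
        C a₁ * (X + C eB) + C (r₂ * (e₂ - e₁)) * C (a₁ * a₂) := by
      rw [heB']
      simp only [C_mul, C_sub, C_add]
      linear_combination (-(C a₁ * C e₂) : R[X]) * hC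
    have p3 : ((X + C e₁) * C a₂ : R[X]) =
        C a₂ * (X + C eB) + C (r₁ * (e₁ - e₂)) * C (a₁ * a₂) := by
      rw [heB']
      simp only [C_mul, C_sub, C_add]
      linear_combination (-(C a₂ * C e₁) : R[X]) * hC
    have p4 : ((X + C e₁) * (X + C e₂) : R[X]) =
        (X + C (e₁ + e₂ - eB)) * (X + C eB)
          + C (-(r₁ * r₂ * (e₁ - e₂) ^ 2)) * C (a₁ * a₂) := by
      rw [heB']
      simp only [C_mul, C_sub, C_add, C_neg, C_pow]
      linear_combination ((C a₁ * C r₁ * C e₂ * (C e₂ - C e₁)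
        + C a₂ * C r₂ * C e₁ * (C e₁ - C e₂)
        + C e₁ * C e₂ * (C a₁ * C r₁ + C a₂ * C r₂ - 1) : R[X])) * hC
    have pW : (X + C eB : R[X]) =
        C r₁ * (C a₁ * (X + C e₂)) + C r₂ * ((X + C e₁) * C a₂) := by
      rw [heB']
      simp only [C_mul, C_add]
      linear_combination (-(X : R[X])) * hC
    have hA : mk (C (a₁ * a₂)) ∈ Ideal.span {mk (C (a₁ * a₂)), mk (X + C eB)} :=
      Ideal.subset_span (Set.mem_insert _ _)
    have hW : mk (X + C eB) ∈ Ideal.span {mk (C (a₁ * a₂)), mk (X + C eB)} :=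
      Ideal.subset_span (Set.mem_insert_of_mem _ rfl)
    have m1 : mk (C a₁) ∈ Ideal.span {mk (C a₁), mk (X + C e₁)} :=
      Ideal.subset_span (Set.mem_insert _ _)
    have m1' : mk (X + C e₁) ∈ Ideal.span {mk (C a₁), mk (X + C e₁)} :=
      Ideal.subset_span (Set.mem_insert_of_mem _ rfl)
    have m2 : mk (C a₂) ∈ Ideal.span {mk (C a₂), mk (X + C e₂)} :=
      Ideal.subset_span (Set.mem_insert _ _)
    have m2' : mk (X + C e₂) ∈ Ideal.span {mk (C a₂), mk (X + C e₂)} :=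
      Ideal.subset_span (Set.mem_insert_of_mem _ rfl)
    have q1 : mk (C a₁) * mk (C a₂) = mk (C (a₁ * a₂)) := by
      rw [← map_mul]; exact congrArg mk p1
    have q2 : mk (C a₁) * mk (X + C e₂) =
        mk (C a₁) * mk (X + C eB) + mk (C (r₂ * (e₂ - e₁))) * mk (C (a₁ * a₂)) := by
      rw [← map_mul, ← map_mul, ← map_mul, ← map_add]; exact congrArg mk p2
    have q3 : mk (X + C e₁) * mk (C a₂) =
        mk (C a₂) * mk (X + C eB) + mk (C (r₁ * (e₁ - e₂))) * mk (C (a₁ * a₂)) := by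
      rw [← map_mul, ← map_mul, ← map_mul, ← map_add]; exact congrArg mk p3
    have q4 : mk (X + C e₁) * mk (X + C e₂) =
        mk (X + C (e₁ + e₂ - eB)) * mk (X + C eB)
          + mk (C (-(r₁ * r₂ * (e₁ - e₂) ^ 2))) * mk (C (a₁ * a₂)) := by
      rw [← map_mul, ← map_mul, ← map_mul, ← map_add]; exact congrArg mk p4
    have qW : mk (X + C eB) =
        mk (C r₁) * (mk (C a₁) * mk (X + C e₂))
          + mk (C r₂) * (mk (X + C e₁) * mk (C a₂)) := by
      rw [← map_mul, ← map_mul, ← map_mul, ← map_mul, ← map_add]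
      exact congrArg mk pW
    apply le_antisymm
    · rw [Ideal.span_pair_mul_span_pair, Ideal.span_le]
      rintro x hx
      simp only [Set.mem_insert_iff, Set.mem_singleton_iff] at hx
      rcases hx with rfl | rfl | rfl | rfl
      · rw [q1]; exact hA
      · rw [q2]
        exact add_mem (Ideal.mul_mem_left _ _ hW) (Ideal.mul_mem_left _ _ hA)
      · rw [q3]
        exact add_mem (Ideal.mul_mem_left _ _ hW) (Ideal.mul_mem_left _ _ hA)
      · rw [q4]
        exact add_mem (Ideal.mul_mem_left _ _ hW) (Ideal.mul_mem_left _ _ hA)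
    · rw [Ideal.span_le]
      rintro x hx
      simp only [Set.mem_insert_iff, Set.mem_singleton_iff] at hx
      rcases hx with rfl | rfl
      · rw [← q1]
        exact Ideal.mul_mem_mul m1 m2
      · rw [qW]
        exact add_mem (Ideal.mul_mem_left _ _ (Ideal.mul_mem_mul m1 m2'))
          (Ideal.mul_mem_left _ _ (Ideal.mul_mem_mul m1' m2))
end

section
/- Let R be an integral domain with 2 ≠ 0. Let a₁,b₁,c₁,a₂,b₂,c₂,Δ,r₁,r₂,d,s,B,C ∈ R satisfy: b₁² − 4a₁c₁ = Δ = b₂² − 4a₂c₂; a₁a₂ ≠ 0; a₁r₁ + a₂r₂ = 1; b₂ − b₁ = 2d; b₁ + b₂ = 2s; B = a₁r₁b₂ + a₂r₂b₁; and 4a₁a₂C = B² − Δ. Then for all x₁, y₁, x₂, y₂ ∈ R one has the composition identity (a₁x₁² + b₁x₁y₁ + c₁y₁²)(a₂x₂² + b₂x₂y₂ + c₂y₂²) = a₁a₂X² + BXY + CY², where X := x₁x₂ + r₂·d·x₁y₂ − r₁·d·x₂y₁ − (r₂c₁ + r₁c₂)y₁y₂ and Y := a₁x₁y₂ + a₂x₂y₁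 + s·y₁y₂. -/
/-- **Gauss-style composition identity (Dirichlet composition).**
Let `R` be an integral domain with `2 ≠ 0`. Given two binary quadratic forms
`[a₁,b₁,c₁]` and `[a₂,b₂,c₂]` of the same discriminant `Δ`, with `a₁a₂ ≠ 0`,
a Bézout relation `a₁r₁ + a₂r₂ = 1`, `b₂ − b₁ = 2d`, `b₁ + b₂ = 2s`,
`B = a₁r₁b₂ + a₂r₂b₁` and `4a₁a₂C = B² − Δ`, the product of the values of the
two forms is a value of the composed form `[a₁a₂, B, C]` at the explicit
bilinear substitution `(X, Y)`. -/
theorem dirichlet_composition_identity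
    (R : Type*) [CommRing R] [IsDomain R] (h2 : (2 : R) ≠ 0)
    (a₁ b₁ c₁ a₂ b₂ c₂ Δ r₁ r₂ d s B C : R)
    (hdisc₁ : b₁ ^ 2 - 4 * a₁ * c₁ = Δ)
    (hdisc₂ : b₂ ^ 2 - 4 * a₂ * c₂ = Δ)
    (ha : a₁ * a₂ ≠ 0)
    (hbezout : a₁ * r₁ + a₂ * r₂ = 1)
    (hd : b₂ - b₁ = 2 * d)
    (hs : b₁ + b₂ = 2 * s)
    (hB : B = a₁ * r₁ * b₂ + a₂ * r₂ * b₁)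
    (hC : 4 * (a₁ * a₂) * C = B ^ 2 - Δ) :
    ∀ x₁ y₁ x₂ y₂ : R,
      (a₁ * x₁ ^ 2 + b₁ * x₁ * y₁ + c₁ * y₁ ^ 2) *
        (a₂ * x₂ ^ 2 + b₂ * x₂ * y₂ + c₂ * y₂ ^ 2) =
      a₁ * a₂ * (x₁ * x₂ + r₂ * d * x₁ * y₂ - r₁ * d * x₂ * y₁
            - (r₂ * c₁ + r₁ * c₂) * y₁ * y₂) ^ 2
        + B * (x₁ * x₂ + r₂ * d * x₁ * y₂ - r₁ * d * x₂ * y₁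
            - (r₂ * c₁ + r₁ * c₂) * y₁ * y₂)
            * (a₁ * x₁ * y₂ + a₂ * x₂ * y₁ + s * y₁ * y₂)
        + C * (a₁ * x₁ * y₂ + a₂ * x₂ * y₁ + s * y₁ * y₂) ^ 2 := by
  intro x₁ y₁ x₂ y₂
  have ha₁ : a₁ ≠ 0 := fun h => ha (by rw [h]; ring)
  have ha₂ : a₂ ≠ 0 := fun h => ha (by rw [h]; ring)
  have hM : (16384 : R) * a₁ ^ 3 * a₂ ^ 5 ≠ 0 := by
    have h16384 : (16384 : R) ≠ 0 := by
      have : (16384 : R) = 2 ^ 14 := by norm_num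
      rw [this]; exact pow_ne_zero _ h2
    exact mul_ne_zero (mul_ne_zero h16384 (pow_ne_zero _ ha₁)) (pow_ne_zero _ ha₂)
  apply mul_left_cancel₀ hM
  linear_combination ((-4096) * a₁^2 * a₂^4 * s^2 * y₁^2 * y₂^2 + (-8192) * a₁^2 * a₂^5 * s * y₁^2 * x₂ * y₂ + (-4096) * a₁^2 * a₂^6 * y₁^2 * x₂^2 + (-8192) * a₁^3 * a₂^4 * s * x₁ * y₁ * y₂^2 + (-8192) * a₁^3 * a₂^5 * x₁ * y₁ * x₂ * y₂ + (-4096) * a₁^4 * a₂^4 * x₁^2 * y₂^2) * hC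
      + ((-4096) * a₁^2 * a₂^4 * s^2 * B * y₁^2 * y₂^2 + (-8192) * a₁^2 * a₂^5 * s * B * y₁^2 * x₂ * y₂ + (-4096) * a₁^2 * a₂^6 * B * y₁^2 * x₂^2 + (-4096) * a₁^2 * b₁ * a₂^5 * r₂ * s^2 * y₁^2 * y₂^2 + (-8192) * a₁^2 * b₁ * a₂^6 * r₂ * s * y₁^2 * x₂ * y₂ + (-4096) * a₁^2 * b₁ * a₂^7 * r₂ * y₁^2 * x₂^2 + (-8192) * a₁^3 * a₂^4 * s * B * x₁ * y₁ * y₂^2 + (-4096) * a₁^3 * a₂^4 * b₂ * r₁ * s^2 * y₁^2 * y₂^2 + (-8192) * a₁^3 * a₂^5 * B * x₁ * y₁ * x₂ * y₂ + (-16384) * a₁^3 * a₂^5 * s * x₁ * y₁ * x₂ * y₂ + (-16384) * a₁^3 * a₂^5 * r₂ * d * s * x₁ * y₁ * y₂^2 + 16384 * a₁^3 * a₂^5 * r₁ * d * s * y₁^2 * x₂ * y₂ + 16384 * a₁^3 * a₂^5 * c₂ * r₁ * s * y₁^2 * y₂^2 + (-8192) * a₁^3 * a₂^5 * b₂ * r₁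 * s * y₁^2 * x₂ * y₂ + (-16384) * a₁^3 * a₂^6 * x₁ * y₁ * x₂^2 + (-16384) * a₁^3 * a₂^6 * r₂ * d * x₁ * y₁ * x₂ * y₂ + 16384 * a₁^3 * a₂^6 * r₁ * d * y₁^2 * x₂^2 + 16384 * a₁^3 * a₂^6 * c₂ * r₁ * y₁^2 * x₂ * y₂ + (-4096) * a₁^3 * a₂^6 * b₂ * r₁ * y₁^2 * x₂^2 + 16384 * a₁^3 * c₁ * a₂^5 * r₂ * s * y₁^2 * y₂^2 + 16384 * a₁^3 * c₁ * a₂^6 * r₂ * y₁^2 * x₂ * y₂ + (-8192) * a₁^3 * b₁ * a₂^5 * r₂ * s * x₁ * y₁ * y₂^2 + (-8192) * a₁^3 * b₁ * a₂^6 * r₂ * x₁ * y₁ * x₂ * y₂ + (-4096) * a₁^4 * a₂^4 * B * x₁^2 * y₂^2 + (-8192) * a₁^4 * a₂^4 * b₂ * r₁ * s * x₁ * y₁ * y₂^2 + (-16384) * a₁^4 * a₂^5 * x₁^2 * x₂ * y₂ + (-16384) * a₁^4 * a₂^5 * r₂ * d * x₁^2 * y₂^2 + 16384 * a₁^4 *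 a₂^5 * r₁ * d * x₁ * y₁ * x₂ * y₂ + 16384 * a₁^4 * a₂^5 * c₂ * r₁ * x₁ * y₁ * y₂^2 + (-8192) * a₁^4 * a₂^5 * b₂ * r₁ * x₁ * y₁ * x₂ * y₂ + 16384 * a₁^4 * c₁ * a₂^5 * r₂ * x₁ * y₁ * y₂^2 + (-4096) * a₁^4 * b₁ * a₂^5 * r₂ * x₁^2 * y₂^2 + (-4096) * a₁^5 * a₂^4 * b₂ * r₁ * x₁^2 * y₂^2) * hB
      - (4096 * a₁^2 * a₂^5 * c₂ * y₁^2 * y₂^2 + 4096 * a₁^2 * a₂^5 * b₂ * y₁^2 * x₂ * y₂ + 4096 * a₁^2 * a₂^6 * y₁^2 * x₂^2 + 1024 * a₁^2 * a₂^6 * Δ * r₂^2 * y₁^2 * y₂^2 + 4096 * a₁^2 * b₁ * a₂^6 * r₂^2 * s * y₁^2 * y₂^2 + 4096 * a₁^2 * b₁ * a₂^7 * r₂^2 * y₁^2 * x₂ * y₂ + (-1024) * a₁^2 * b₁^2 * a₂^6 * r₂^2 * y₁^2 * y₂^2 + 4096 * a₁^3 * a₂^5 * b₂ * r₁ * r₂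 * s * y₁^2 * y₂^2 + 8192 * a₁^3 * a₂^6 * r₂ * x₁ * y₁ * x₂ * y₂ + 8192 * a₁^3 * a₂^6 * r₂^2 * d * x₁ * y₁ * y₂^2 + (-8192) * a₁^3 * a₂^6 * r₁ * r₂ * d * y₁^2 * x₂ * y₂ + (-8192) * a₁^3 * a₂^6 * c₂ * r₁ * r₂ * y₁^2 * y₂^2 + 4096 * a₁^3 * a₂^6 * b₂ * r₁ * r₂ * y₁^2 * x₂ * y₂ + (-4096) * a₁^3 * c₁ * a₂^6 * r₂^2 * y₁^2 * y₂^2 + 4096 * a₁^3 * b₁ * a₂^6 * r₂^2 * x₁ * y₁ * y₂^2 + 4096 * a₁^4 * a₂^5 * b₂ * r₁ * r₂ * x₁ * y₁ * y₂^2) * hdisc₁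
      - ((-1024) * a₁^2 * a₂^4 * Δ * y₁^2 * y₂^2 + 1024 * a₁^2 * b₁^2 * a₂^4 * y₁^2 * y₂^2 + 2048 * a₁^3 * a₂^5 * Δ * r₁ * r₂ * y₁^2 * y₂^2 + 4096 * a₁^3 * b₁ * a₂^4 * x₁ * y₁ * y₂^2 + 4096 * a₁^3 * b₁ * a₂^5 * r₁ * r₂ * s * y₁^2 * y₂^2 + 4096 * a₁^3 * b₁ * a₂^6 * r₁ * r₂ * y₁^2 * x₂ * y₂ + (-2048) * a₁^3 * b₁^2 * a₂^5 * r₁ * r₂ * y₁^2 * y₂^2 + 4096 * a₁^4 * a₂^4 * x₁^2 * y₂^2 + 1024 * a₁^4 * a₂^4 * Δ * r₁^2 * y₁^2 * y₂^2 + 4096 * a₁^4 * a₂^4 * b₂ * r₁^2 * s * y₁^2 * y₂^2 + (-1024) * a₁^4 * a₂^4 * b₂^2 * r₁^2 * y₁^2 * y₂^2 + 8192 * a₁^4 * a₂^5 * r₁ * x₁ * y₁ * x₂ * y₂ + 8192 * a₁^4 * a₂^5 * r₁ * r₂ * d * x₁ * y₁ * y₂^2 + (-8192) * a₁^4 * a₂^5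 * r₁^2 * d * y₁^2 * x₂ * y₂ + (-4096) * a₁^4 * a₂^5 * c₂ * r₁^2 * y₁^2 * y₂^2 + 4096 * a₁^4 * a₂^5 * b₂ * r₁^2 * y₁^2 * x₂ * y₂ + 4096 * a₁^4 * b₁ * a₂^5 * r₁ * r₂ * x₁ * y₁ * y₂^2 + 4096 * a₁^5 * a₂^4 * b₂ * r₁^2 * x₁ * y₁ * y₂^2) * hdisc₂
      - ((-4096) * a₁^3 * a₂^6 * Δ * r₂^2 * x₁ * y₁ * y₂^2 + 4096 * a₁^3 * a₂^6 * Δ * r₁ * r₂ * y₁^2 * x₂ * y₂ + (-8192) * a₁^3 * b₁ * a₂^6 * r₂^2 * s * x₁ * y₁ * y₂^2 + 8192 * a₁^3 * b₁ * a₂^6 * r₁ * r₂ * s * y₁^2 * x₂ * y₂ + (-8192) * a₁^3 * b₁ * a₂^7 * r₂^2 * x₁ * y₁ * x₂ * y₂ + 8192 * a₁^3 * b₁ * a₂^7 * r₁ * r₂ * y₁^2 * x₂^2 + 4096 * a₁^3 * b₁^2 * a₂^6 * r₂^2 * x₁ * y₁ * y₂^2 + (-4096) * a₁^3 * b₁^2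 * a₂^6 * r₁ * r₂ * y₁^2 * x₂ * y₂ + (-4096) * a₁^4 * a₂^5 * Δ * r₁ * r₂ * x₁ * y₁ * y₂^2 + 4096 * a₁^4 * a₂^5 * Δ * r₁^2 * y₁^2 * x₂ * y₂ + (-8192) * a₁^4 * a₂^5 * b₂ * r₁ * r₂ * s * x₁ * y₁ * y₂^2 + 8192 * a₁^4 * a₂^5 * b₂ * r₁^2 * s * y₁^2 * x₂ * y₂ + 4096 * a₁^4 * a₂^5 * b₂^2 * r₁ * r₂ * x₁ * y₁ * y₂^2 + (-4096) * a₁^4 * a₂^5 * b₂^2 * r₁^2 * y₁^2 * x₂ * y₂ + (-16384) * a₁^4 * a₂^6 * r₂ * x₁^2 * x₂ * y₂ + (-8192) * a₁^4 * a₂^6 * r₂^2 * d * x₁^2 * y₂^2 + 16384 * a₁^4 * a₂^6 * r₁ * x₁ * y₁ * x₂^2 + 16384 * a₁^4 * a₂^6 * r₁ * r₂ * d * x₁ * y₁ * x₂ * y₂ + (-8192) * a₁^4 * a₂^6 * r₁^2 * d * y₁^2 * x₂^2 + (-4096) * a₁^4 * a₂^6 * b₂ * r₂^2 * x₁^2 *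 y₂^2 + 4096 * a₁^4 * a₂^6 * b₂ * r₁^2 * y₁^2 * x₂^2 + (-4096) * a₁^4 * b₁ * a₂^6 * r₂^2 * x₁^2 * y₂^2 + 4096 * a₁^4 * b₁ * a₂^6 * r₁^2 * y₁^2 * x₂^2 + (-8192) * a₁^5 * a₂^5 * b₂ * r₁ * r₂ * x₁^2 * y₂^2 + 8192 * a₁^5 * a₂^5 * b₂ * r₁^2 * x₁ * y₁ * x₂ * y₂) * hd
      - (2048 * a₁^2 * a₂^4 * Δ * s * y₁^2 * y₂^2 + 1024 * a₁^2 * a₂^4 * b₂ * Δ * y₁^2 * y₂^2 + 4096 * a₁^2 * a₂^5 * Δ * y₁^2 * x₂ * y₂ + 1024 * a₁^2 * b₁ * a₂^4 * Δ * y₁^2 * y₂^2 + (-2048) * a₁^2 * b₁ * a₂^6 * Δ * r₂^2 * y₁^2 * y₂^2 + (-2048) * a₁^2 * b₁^2 * a₂^6 * r₂^2 * s * y₁^2 * y₂^2 + (-1024) * a₁^2 * b₁^2 * a₂^6 * b₂ * r₂^2 * y₁^2 * y₂^2 + (-4096) * a₁^2 * b₁^2 * a₂^7 * r₂^2 * y₁^2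 * x₂ * y₂ + 1024 * a₁^2 * b₁^3 * a₂^6 * r₂^2 * y₁^2 * y₂^2 + 4096 * a₁^3 * a₂^4 * Δ * x₁ * y₁ * y₂^2 + (-2048) * a₁^3 * a₂^5 * b₂ * Δ * r₁ * r₂ * y₁^2 * y₂^2 + (-2048) * a₁^3 * b₁ * a₂^5 * Δ * r₁ * r₂ * y₁^2 * y₂^2 + (-4096) * a₁^3 * b₁ * a₂^5 * b₂ * r₁ * r₂ * s * y₁^2 * y₂^2 + (-8192) * a₁^3 * b₁ * a₂^6 * r₂ * x₁ * y₁ * x₂ * y₂ + (-4096) * a₁^3 * b₁ * a₂^6 * b₂ * r₂^2 * x₁ * y₁ * y₂^2 + (-4096) * a₁^3 * b₁ * a₂^6 * b₂ * r₁ * r₂ * y₁^2 * x₂ * y₂ + (-4096) * a₁^3 * b₁^2 * a₂^6 * r₁ * r₂ * y₁^2 * x₂ * y₂ + (-2048) * a₁^4 * a₂^4 * b₂ * Δ * r₁^2 * y₁^2 * y₂^2 + (-2048) * a₁^4 * a₂^4 * b₂^2 * r₁^2 * s * y₁^2 * y₂^2 + 1024 * a₁^4 * a₂^4 * b₂^3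 * r₁^2 * y₁^2 * y₂^2 + (-8192) * a₁^4 * a₂^5 * b₂ * r₁ * x₁ * y₁ * x₂ * y₂ + (-4096) * a₁^4 * a₂^5 * b₂^2 * r₁ * r₂ * x₁ * y₁ * y₂^2 + (-1024) * a₁^4 * b₁ * a₂^4 * b₂^2 * r₁^2 * y₁^2 * y₂^2 + (-4096) * a₁^4 * b₁ * a₂^5 * b₂ * r₁ * r₂ * x₁ * y₁ * y₂^2 + (-4096) * a₁^4 * b₁ * a₂^5 * b₂ * r₁^2 * y₁^2 * x₂ * y₂ + (-4096) * a₁^5 * a₂^4 * b₂^2 * r₁^2 * x₁ * y₁ * y₂^2) * hs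
      + ((-1024) * a₁^2 * a₂^4 * Δ^2 * y₁^2 * y₂^2 + (-1024) * a₁^2 * a₂^5 * Δ^2 * r₂ * y₁^2 * y₂^2 + (-2048) * a₁^2 * b₁ * a₂^4 * b₂ * Δ * y₁^2 * y₂^2 + (-4096) * a₁^2 * b₁ * a₂^5 * Δ * y₁^2 * x₂ * y₂ + (-2048) * a₁^2 * b₁ * a₂^5 * b₂ * Δ * r₂ * y₁^2 * y₂^2 + (-4096) * a₁^2 * b₁ * a₂^6 * Δ * r₂ * y₁^2 * x₂ * y₂ + (-1024) * a₁^2 * b₁^2 * a₂^4 * b₂^2 * y₁^2 * y₂^2 + (-4096) * a₁^2 * b₁^2 * a₂^5 * b₂ * y₁^2 * x₂ * y₂ + (-1024) * a₁^2 * b₁^2 * a₂^5 * b₂^2 * r₂ * y₁^2 * y₂^2 + (-4096) * a₁^2 * b₁^2 * a₂^6 * y₁^2 * x₂^2 + (-4096) * a₁^2 * b₁^2 * a₂^6 * b₂ * r₂ * y₁^2 * x₂ * y₂ + (-4096) * a₁^2 * b₁^2 * a₂^7 * r₂ * y₁^2 * x₂^2 + (-1024) * a₁^3 * a₂^4 *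 Δ^2 * r₁ * y₁^2 * y₂^2 + (-4096) * a₁^3 * a₂^4 * b₂ * Δ * x₁ * y₁ * y₂^2 + (-8192) * a₁^3 * a₂^5 * Δ * x₁ * y₁ * x₂ * y₂ + (-4096) * a₁^3 * a₂^5 * b₂ * Δ * r₂ * x₁ * y₁ * y₂^2 + (-2048) * a₁^3 * b₁ * a₂^4 * b₂ * Δ * r₁ * y₁^2 * y₂^2 + (-4096) * a₁^3 * b₁ * a₂^4 * b₂^2 * x₁ * y₁ * y₂^2 + (-4096) * a₁^3 * b₁ * a₂^5 * Δ * r₁ * y₁^2 * x₂ * y₂ + (-16384) * a₁^3 * b₁ * a₂^5 * b₂ * x₁ * y₁ * x₂ * y₂ + (-4096) * a₁^3 * b₁ * a₂^5 * b₂^2 * r₂ * x₁ * y₁ * y₂^2 + (-16384) * a₁^3 * b₁ * a₂^6 * x₁ * y₁ * x₂^2 + (-8192) * a₁^3 * b₁ * a₂^6 * b₂ * r₂ * x₁ * y₁ * x₂ * y₂ + (-1024) * a₁^3 * b₁^2 * a₂^4 * b₂^2 * r₁ * y₁^2 * y₂^2 + (-4096) * a₁^3 * b₁^2 * a₂^5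 * b₂ * r₁ * y₁^2 * x₂ * y₂ + (-4096) * a₁^3 * b₁^2 * a₂^6 * r₁ * y₁^2 * x₂^2 + (-4096) * a₁^4 * a₂^4 * b₂ * Δ * r₁ * x₁ * y₁ * y₂^2 + (-4096) * a₁^4 * a₂^4 * b₂^2 * x₁^2 * y₂^2 + (-16384) * a₁^4 * a₂^5 * b₂ * x₁^2 * x₂ * y₂ + (-4096) * a₁^4 * a₂^5 * b₂^2 * r₂ * x₁^2 * y₂^2 + (-4096) * a₁^4 * b₁ * a₂^4 * b₂^2 * r₁ * x₁ * y₁ * y₂^2 + (-8192) * a₁^4 * b₁ * a₂^5 * b₂ * r₁ * x₁ * y₁ * x₂ * y₂ + (-4096) * a₁^5 * a₂^4 * b₂^2 * r₁ * x₁^2 * y₂^2) * hbezout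
end

section
/- Let R be a principal ideal domain of characteristic different from 2, let Δ ∈ R, and let π, μ ∈ R satisfy Δ = π² + 4μ. Then H₀ (the set of values of the principal form class) is a subgroup of (R/ΔR)ˣ containing every square of (R/ΔR)ˣ. Moreover, if 2 is invertible in R/ΔR, then H₀ = Ū·((R/ΔR)ˣ)², where Ū is the image of Rˣ in (R/ΔR)ˣ. -/
/-- **The set of values of the principal form class is a subgroup containing the squares.**
`R` is a PID of characteristic ≠ 2, `Δ = π² + 4μ`. In `Q := R/ΔR`, let
`H₀ ⊆ Qˣ` consist of the units whose residue is `ε·(x² + πxy − μy²)` for some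
unit `ε` of `R` and some `x, y ∈ R` (the set of values of the principal form
class `[1, π, −μ]`). Then `H₀` is a subgroup of `Qˣ` containing every square,
and if `2` is invertible in `Q` then `H₀ = Ū·(Qˣ)²` where `Ū` is the image
of `Rˣ`. -/
theorem principal_genus_values_subgroup
    (R : Type*) [CommRing R] [IsDomain R] [IsPrincipalIdealRing R]
    (h2 : (2 : R) ≠ 0)
    (Δ π μ : R) (hΔ : Δ = π ^ 2 + 4 * μ) :
    letI Q := R ⧸ Ideal.span {Δ}
    letI mk : R →+* Q := Ideal.Quotient.mk _
    letI H₀ : Set Qˣ :=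
      {u : Qˣ | ∃ ε : Rˣ, ∃ x y : R,
        (u : Q) = mk (ε : R) * mk (x ^ 2 + π * x * y - μ * y ^ 2)}
    (1 ∈ H₀) ∧
    (∀ u v : Qˣ, u ∈ H₀ → v ∈ H₀ → u * v ∈ H₀) ∧
    (∀ u : Qˣ, u ∈ H₀ → u⁻¹ ∈ H₀) ∧
    (∀ u : Qˣ, u ^ 2 ∈ H₀) ∧
    (IsUnit (2 : Q) →
      H₀ = {u : Qˣ | ∃ ε : Rˣ, ∃ v : Qˣ, u = (Units.map mk.toMonoidHom ε) * v ^ 2}) := by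
  set Q := R ⧸ Ideal.span {Δ} with hQ
  set mk : R →+* Q := Ideal.Quotient.mk _ with hmk
  -- squares are values
  have hsq : ∀ u : Qˣ, ∃ ε : Rˣ, ∃ x y : R,
      ((u ^ 2 : Qˣ) : Q) = mk (ε : R) * mk (x ^ 2 + π * x * y - μ * y ^ 2) := by
    intro u
    obtain ⟨r, hr⟩ := Ideal.Quotient.mk_surjective (u : Q)
    refine ⟨1, r, 0, ?_⟩
    have : ((u ^ 2 : Qˣ) : Q) = (u : Q) ^ 2 := by push_cast; ring
    rw [this, ← hr]
    simp only [Units.val_one, map_one, one_mul]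
    rw [← map_pow]
    exact congrArg mk (by ring)
  -- closure under multiplication
  have hmul : ∀ u v : Qˣ,
      (∃ ε : Rˣ, ∃ x y : R,
        ((u : Qˣ) : Q) = mk (ε : R) * mk (x ^ 2 + π * x * y - μ * y ^ 2)) →
      (∃ ε : Rˣ, ∃ x y : R,
        ((v : Qˣ) : Q) = mk (ε : R) * mk (x ^ 2 + π * x * y - μ * y ^ 2)) →
      ∃ ε : Rˣ, ∃ x y : R,
        ((u * v : Qˣ) : Q) = mk (ε : R) * mk (x ^ 2 + π * x * y - μ * y ^ 2) := by
    rintro u v ⟨ε₁, x, y, hu⟩ ⟨ε₂, a, b, hv⟩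
    refine ⟨ε₁ * ε₂, x * a + μ * y * b, x * b + y * a + π * y * b, ?_⟩
    rw [Units.val_mul, hu, hv, ← map_mul, ← map_mul, ← map_mul, Units.val_mul, ← map_mul]
    exact congrArg mk (by ring)
  refine ⟨⟨1, 1, 0, by simp⟩, hmul, ?_, hsq, ?_⟩
  · -- inverses
    intro u hu
    have h := hmul ((u⁻¹) ^ 2) u (hsq u⁻¹) hu
    have he : (u⁻¹) ^ 2 * u = u⁻¹ := by group
    rwa [he] at h
  · -- description when 2 is invertible
    intro h2Q
    ext u
    constructor
    · rintro ⟨ε, x, y, hu⟩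
      have h4 : IsUnit (4 : Q) := by
        have := h2Q.pow 2
        norm_num at this
        exact this
      -- 4 * q(x,y) ≡ (2x+πy)^2 mod Δ
      have hcong : mk (4 * (x ^ 2 + π * x * y - μ * y ^ 2)) = mk ((2 * x + π * y) ^ 2) := by
        rw [Ideal.Quotient.eq]
        exact Ideal.mem_span_singleton.mpr ⟨-(y ^ 2), by rw [hΔ]; ring⟩
      set t : Q := mk (2 * x + π * y) with ht
      have hεu : IsUnit (mk (ε : R)) := (ε.isUnit).map mk
      have hqu : IsUnit (mk (x ^ 2 + π * x * y - μ * y ^ 2)) := by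
        have : IsUnit ((u : Q)) := u.isUnit
        rw [hu] at this
        exact (isUnit_of_mul_isUnit_right this)
      have htu : IsUnit t := by
        have h4q : IsUnit (mk (4 * (x ^ 2 + π * x * y - μ * y ^ 2))) := by
          rw [map_mul]
          refine (IsUnit.mul ?_ hqu)
          rw [map_ofNat]; exact h4
        rw [hcong] at h4q
        have : t * t = mk ((2 * x + π * y) ^ 2) := by rw [ht, ← map_mul]; exact congrArg mk (by ring)
        rw [← this] at h4q
        exact isUnit_of_mul_isUnit_left h4q
      set w : Qˣ := htu.unit with hw
      set two : Qˣ := h2Q.unit with htwo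
      have key : u * two ^ 2 = Units.map mk.toMonoidHom ε * w ^ 2 := by
        apply Units.ext
        push_cast [Units.val_mul, Units.val_pow_eq_pow_val]
        rw [hu, IsUnit.unit_spec, IsUnit.unit_spec]
        have h1 : t ^ 2 = mk (4 * (x ^ 2 + π * x * y - μ * y ^ 2)) := by
          rw [hcong, ht, ← map_pow]
        have h2 : ((Units.map mk.toMonoidHom ε : Qˣ) : Q) = mk (ε : R) := rfl
        rw [h2, h1, map_mul]
        have h4' : mk (4 : R) = (2 : Q) ^ 2 := by rw [map_ofNat]; norm_num
        rw [h4']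
        ring
      refine ⟨ε, w * two⁻¹, ?_⟩
      have hpow : (w * two⁻¹) ^ 2 = w ^ 2 * (two ^ 2)⁻¹ := by
        rw [mul_pow, inv_pow]
      rw [hpow, ← mul_assoc, ← key]
      group
    · rintro ⟨ε, v, huv⟩
      obtain ⟨r, hr⟩ := Ideal.Quotient.mk_surjective (v : Q)
      refine ⟨ε, r, 0, ?_⟩
      rw [huv]
      push_cast [Units.val_mul, Units.val_pow_eq_pow_val]
      have h2 : ((Units.map mk.toMonoidHom ε : Qˣ) : Q) = mk (ε : R) := rfl
      rw [h2, ← hr, ← map_pow]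
      exact congrArg _ (congrArg mk (by ring))
end

section
/- Let R be a principal ideal domain of characteristic different from 2, let [a₀,b₀,c₀] be a primitive binary quadratic form over R, and let h ∈ R be nonzero. Then there exists a matrix M ∈ SL₂(R) such that M·[a₀,b₀,c₀] = [a,b,c] for some a,b,c ∈ R with a ≠ 0 and a coprime to h (i.e. ⟨a,h⟩ = R). In particular, every primitive quadratic form over R is GL₂ᵗʷ-equivalent (indeed SL₂(R)-equivalent) to a form whose first coefficient is nonzero and coprime to h. -/
open UniqueFactorizationMonoid Classical in
private theorem exists_good_pair
    {R : Type*} [CommRing R] [IsDomain R] [IsPrincipalIdealRing R]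
    (a₀ b₀ c₀ : R)
    (hprim : Ideal.span {a₀, b₀, c₀} = (⊤ : Ideal R))
    (h : R) (hh : h ≠ 0) :
    ∃ x y : R, IsCoprime x y ∧ (a₀ * x ^ 2 + b₀ * x * y + c₀ * y ^ 2) ≠ 0 ∧
      IsCoprime (a₀ * x ^ 2 + b₀ * x * y + c₀ * y ^ 2) h := by
  have hb₀ : ∀ p : R, Prime p → p ∣ a₀ → p ∣ c₀ → ¬ p ∣ b₀ := by
    intro p hp hpa hpc hpb
    have h1 : (1 : R) ∈ Ideal.span ({a₀, b₀, c₀} : Set R) := by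
      rw [hprim]; trivial
    have hsub : Ideal.span ({a₀, b₀, c₀} : Set R) ≤ Ideal.span ({p} : Set R) := by
      apply Ideal.span_le.2
      rintro z (rfl | rfl | rfl) <;>
        simpa [Ideal.mem_span_singleton] using ‹_›
    have := hsub h1
    rw [Ideal.mem_span_singleton] at this
    exact hp.not_unit (isUnit_of_dvd_one this)
  by_cases hu : IsUnit h
  · have hcopr : ∀ a : R, IsCoprime a h := by
      intro a
      obtain ⟨u, rfl⟩ := hu
      exact ⟨0, ↑u⁻¹, by simp⟩
    by_cases ha : a₀ ≠ 0
    · exact ⟨1, 0, isCoprime_one_left, by simpa using ha, hcopr _⟩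
    by_cases hc : c₀ ≠ 0
    · exact ⟨0, 1, isCoprime_zero_left.2 isUnit_one, by simpa using hc, hcopr _⟩
    push_neg at ha hc
    subst ha; subst hc
    have hb : b₀ ≠ 0 := by
      rintro rfl
      simp at hprim
    exact ⟨1, 1, isCoprime_one_left, by simpa using hb, hcopr _⟩
  · -- build x, y from the prime factors of h
    set x : R := ((factors h).filter (fun p => p ∣ a₀ ∧ ¬ p ∣ c₀)).prod with hxdef
    set y : R := ((factors h).filter (fun p => ¬ p ∣ a₀)).prod with hydef
    have hxdvd : ∀ p : R, Prime p → p ∣ x → p ∣ a₀ ∧ ¬ p ∣ c₀ := by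
      intro p hp hpx
      obtain ⟨q, hq, hpq⟩ := hp.exists_mem_multiset_dvd hpx
      obtain ⟨hq1, hq2, hq3⟩ := Multiset.mem_filter.mp hq
      have hassoc := hp.associated_of_dvd (prime_of_factor q hq1) hpq
      exact ⟨hassoc.dvd.trans hq2, fun hc => hq3 (hassoc.symm.dvd.trans hc)⟩
    have hydvd : ∀ p : R, Prime p → p ∣ y → ¬ p ∣ a₀ := by
      intro p hp hpy
      obtain ⟨q, hq, hpq⟩ := hp.exists_mem_multiset_dvd hpy
      obtain ⟨hq1, hq2⟩ := Multiset.mem_filter.mp hq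
      have hassoc := hp.associated_of_dvd (prime_of_factor q hq1) hpq
      exact fun hc => hq2 (hassoc.symm.dvd.trans hc)
    have hx0 : x ≠ 0 := by
      refine Multiset.prod_ne_zero ?_
      intro h0
      exact (prime_of_factor 0 (Multiset.mem_of_mem_filter h0)).ne_zero rfl
    have hy0 : y ≠ 0 := by
      refine Multiset.prod_ne_zero ?_
      intro h0
      exact (prime_of_factor 0 (Multiset.mem_of_mem_filter h0)).ne_zero rfl
    have hxy : IsCoprime x y := by
      refine isCoprime_of_prime_dvd (fun ⟨hx, _⟩ => hx0 hx) ?_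
      intro p hp hpx hpy
      exact hydvd p hp hpy (hxdvd p hp hpx).1
    -- main coprimality claim
    have hmain : ∀ p : R, Prime p → p ∣ h → ¬ p ∣ (a₀ * x ^ 2 + b₀ * x * y + c₀ * y ^ 2) := by
      intro p hp hph hpq
      by_cases hpa : p ∣ a₀
      · by_cases hpc : p ∣ c₀
        · -- then p ∤ b₀, p ∤ x, p ∤ y, and p ∣ b₀ x y, contradiction
          have hpx : ¬ p ∣ x := fun hpx => (hxdvd p hp hpx).2 hpc
          have hpy : ¬ p ∣ y := fun hpy => hydvd p hp hpy hpa
          have : p ∣ b₀ * x * y := by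
            have h1 : p ∣ a₀ * x ^ 2 + c₀ * y ^ 2 :=
              dvd_add (hpa.mul_right _) (hpc.mul_right _)
            have := dvd_sub hpq h1
            simpa [mul_comm, mul_assoc, mul_left_comm, add_sub_add_comm,
              add_sub_cancel_left, add_sub_cancel_right, show
              a₀ * x ^ 2 + b₀ * x * y + c₀ * y ^ 2 - (a₀ * x ^ 2 + c₀ * y ^ 2)
                = b₀ * x * y by ring] using this
          rcases (hp.dvd_mul.mp this) with h' | h'
          · rcases hp.dvd_mul.mp h' with h'' | h''
            · exact hb₀ p hp hpa hpc h''
            · exact hpx h''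
          · exact hpy h'
        · -- p ∣ x (it's one of the filtered factors), p ∤ y, so p ∣ c₀ y², contra
          have hpx : p ∣ x := by
            obtain ⟨q, hq, hassoc⟩ := exists_mem_factors_of_dvd hh hp.irreducible hph
            have hqa : q ∣ a₀ := hassoc.symm.dvd.trans hpa
            have hqc : ¬ q ∣ c₀ := fun hc => hpc (hassoc.dvd.trans hc)
            exact hassoc.dvd.trans (Multiset.dvd_prod (Multiset.mem_filter.mpr ⟨hq, hqa, hqc⟩))
          have hpy : ¬ p ∣ y := fun hpy => hydvd p hp hpy hpa
          have : p ∣ c₀ * y ^ 2 := by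
            have h1 : p ∣ a₀ * x ^ 2 + b₀ * x * y :=
              dvd_add (hpa.mul_right _) ((hpx.mul_left b₀).mul_right y)
            have := dvd_sub hpq h1
            simpa [show a₀ * x ^ 2 + b₀ * x * y + c₀ * y ^ 2 - (a₀ * x ^ 2 + b₀ * x * y)
              = c₀ * y ^ 2 by ring] using this
          rcases hp.dvd_mul.mp this with h' | h'
          · exact hpc h'
          · exact hpy (hp.dvd_of_dvd_pow h')
      · -- p ∣ y, p ∤ x, so p ∣ a₀ x², contra
        have hpy : p ∣ y := by
          obtain ⟨q, hq, hassoc⟩ := exists_mem_factors_of_dvd hh hp.irreducible hph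
          have hqa : ¬ q ∣ a₀ := fun hc => hpa (hassoc.dvd.trans hc)
          exact hassoc.dvd.trans (Multiset.dvd_prod (Multiset.mem_filter.mpr ⟨hq, hqa⟩))
        have hpx : ¬ p ∣ x := fun hpx => hpa (hxdvd p hp hpx).1
        have : p ∣ a₀ * x ^ 2 := by
          have h1 : p ∣ b₀ * x * y + c₀ * y ^ 2 := by
            refine dvd_add ?_ ?_
            · exact Dvd.dvd.mul_left hpy _
            · exact (dvd_pow hpy two_ne_zero).mul_left c₀
          have := dvd_sub hpq h1
          simpa [show a₀ * x ^ 2 + b₀ * x * y + c₀ * y ^ 2 - (b₀ * x * y + c₀ * y ^ 2)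
            = a₀ * x ^ 2 by ring] using this
        rcases hp.dvd_mul.mp this with h' | h'
        · exact hpa h'
        · exact hpx (hp.dvd_of_dvd_pow h')
    have hcop : IsCoprime (a₀ * x ^ 2 + b₀ * x * y + c₀ * y ^ 2) h :=
      isCoprime_of_prime_dvd (fun ⟨_, hz⟩ => hh hz)
        (fun p hp hpq hph => hmain p hp hph hpq)
    have hq0 : (a₀ * x ^ 2 + b₀ * x * y + c₀ * y ^ 2) ≠ 0 := by
      intro h0
      rw [h0] at hcop
      exact hu (isCoprime_zero_left.mp hcop)
    exact ⟨x, y, hxy, hq0, hcop⟩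

/-- **Existence of a representative with first coefficient coprime to `h`.**
Over a PID `R` of characteristic ≠ 2, every primitive binary quadratic form
`[a₀,b₀,c₀]` is `SL₂(R)`-equivalent (hence `GL₂ᵗʷ`-equivalent) to a form
`[a,b,c]` with `a ≠ 0` and `a` coprime to a given nonzero `h ∈ R`. -/
theorem exists_rep_firstCoeff_coprime
    (R : Type*) [CommRing R] [IsDomain R] [IsPrincipalIdealRing R]
    (h2 : (2 : R) ≠ 0)
    (a₀ b₀ c₀ : R)
    (hprim : Ideal.span {a₀, b₀, c₀} = (⊤ : Ideal R))
    (h : R) (hh : h ≠ 0) :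
    ∃ M : Matrix (Fin 2) (Fin 2) R, M.det = 1 ∧
      ∃ a b c : R, a ≠ 0 ∧ IsCoprime a h ∧
        ∀ x y : R,
          a * x ^ 2 + b * x * y + c * y ^ 2 =
            a₀ * (M 0 0 * x + M 0 1 * y) ^ 2
              + b₀ * (M 0 0 * x + M 0 1 * y) * (M 1 0 * x + M 1 1 * y)
              + c₀ * (M 1 0 * x + M 1 1 * y) ^ 2 := by
  obtain ⟨x, y, hxy, hq0, hcop⟩ := exists_good_pair a₀ b₀ c₀ hprim h hh
  obtain ⟨s, t, hst⟩ := hxy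
  refine ⟨!![x, -t; y, s], ?_, a₀ * x ^ 2 + b₀ * x * y + c₀ * y ^ 2,
    -2 * a₀ * x * t + b₀ * (x * s - t * y) + 2 * c₀ * y * s,
    a₀ * t ^ 2 - b₀ * t * s + c₀ * s ^ 2, hq0, hcop, ?_⟩
  · simp [Matrix.det_fin_two_of]
    linear_combination hst
  · intro X Y
    simp only [Matrix.of_apply, Matrix.cons_val', Matrix.cons_val_zero, Matrix.cons_val_one,
      Matrix.head_cons, Matrix.empty_val', Matrix.cons_val_fin_one, Matrix.head_fin_const]
    ring
end

section
/- Let R be a principal ideal domain of characteristic different from 2, let Δ ∈ R be nonzero, and let π, μ ∈ R satisfy Δ = π² + 4μ. Let [a,b,c] be a primitive binary quadratic form over R of discriminant Δ with b ≡ π (mod 2R), a ≠ 0 and a coprime to Δ (so the residue ā of a is a unit of R/ΔR). Then Ū·val_Δ([a,b,c]) = ā⁻¹·H₀ as subsets of (R/ΔR)ˣ; in particular, the set of values of the equivalence class of [a,b,c] in (R/ΔR)ˣ is a coset of H₀. -/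
/-- **The set of values of a class of forms is a coset of `H₀`.**
`R` a PID of characteristic ≠ 2, `Δ ≠ 0`, `Δ = π² + 4μ`. If `[a,b,c]` is a
primitive form of discriminant `Δ` with `b ≡ π (mod 2R)`, `a ≠ 0` and `a`
coprime to `Δ`, then `Ū·val_Δ([a,b,c]) = ā⁻¹·H₀` in `(R/ΔR)ˣ`: a unit `u`
is (up to `Rˣ`) a value of `[a,b,c]` iff `ā·u ∈ H₀`. -/
theorem values_coset_of_H₀
    (R : Type*) [CommRing R] [IsDomain R] [IsPrincipalIdealRing R]
    (h2 : (2 : R) ≠ 0)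
    (Δ π μ : R) (hΔ0 : Δ ≠ 0) (hΔ : Δ = π ^ 2 + 4 * μ)
    (a b c e : R)
    (hprim : Ideal.span {a, b, c} = (⊤ : Ideal R))
    (hdisc : b ^ 2 - 4 * a * c = Δ)
    (hbπ : b - π = 2 * e)
    (ha0 : a ≠ 0) (haΔ : IsCoprime a Δ) :
    letI Q := R ⧸ Ideal.span {Δ}
    letI mk : R →+* Q := Ideal.Quotient.mk _
    ∀ u : Qˣ,
      (∃ ε : Rˣ, ∃ x y : R,
          (u : Q) = mk ((ε : R) * (a * x ^ 2 + b * x * y + c * y ^ 2)))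
        ↔
      (∃ ε : Rˣ, ∃ x y : R,
          mk a * (u : Q) = mk ((ε : R) * (x ^ 2 + π * x * y - μ * y ^ 2))) := by
  intro u
  have h4 : (4 : R) ≠ 0 := by
    have := mul_ne_zero h2 h2
    intro h; exact this (by linear_combination h)
  have hac : a * c = e ^ 2 + π * e - μ := by
    have h : 4 * (a * c) = 4 * (e ^ 2 + π * e - μ) := by
      linear_combination (b + π + 2 * e) * hbπ - hdisc - hΔ
    exact mul_left_cancel₀ h4 h
  have hb : b = π + 2 * e := by linear_combination hbπ
  have hμ : μ = e ^ 2 + π * e - a * c := by linear_combination hac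
  subst hb
  subst hμ
  set mk : R →+* R ⧸ Ideal.span {Δ} := Ideal.Quotient.mk (Ideal.span {Δ}) with hmk
  obtain ⟨s, t, hst⟩ := haΔ
  have hΔz : mk Δ = 0 :=
    Ideal.Quotient.eq_zero_iff_mem.mpr (Ideal.mem_span_singleton_self Δ)
  have hsa : mk s * mk a = 1 := by
    rw [← map_mul, show s * a = 1 - t * Δ by linear_combination hst, map_sub, map_mul,
      hΔz, mul_zero, sub_zero, map_one]
  constructor
  · rintro ⟨ε, x, y, hu⟩
    refine ⟨ε, a * x + e * y, y, ?_⟩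
    rw [hu, ← map_mul]
    exact congrArg mk (by ring)
  · rintro ⟨ε, X, Y, hu⟩
    refine ⟨ε, s * (X - e * Y), s * a * Y, ?_⟩
    set T : R := (ε : R) * (a * (X - e * Y) ^ 2 + (π + 2 * e) * (X - e * Y) * (a * Y)
      + c * (a * Y) ^ 2) with hT
    have h1 : mk a * mk T = mk a ^ 2 * (mk a * (u : _)) := by
      rw [hu]
      calc mk a * mk T = mk (a * T) := (map_mul mk a T).symm
        _ = mk (a ^ 2 * ((ε : R) *
              (X ^ 2 + π * X * Y - (e ^ 2 + π * e - a * c) * Y ^ 2))) :=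
          congrArg mk (by ring)
        _ = mk a ^ 2 * mk ((ε : R) *
              (X ^ 2 + π * X * Y - (e ^ 2 + π * e - a * c) * Y ^ 2)) := by
          simp only [map_mul, map_pow]
    have h2' : mk T = mk a ^ 2 * (u : _) := by
      calc mk T = (mk s * mk a) * mk T := by rw [hsa, one_mul]
        _ = mk s * (mk a * mk T) := by ring
        _ = mk s * (mk a ^ 2 * (mk a * (u : _))) := by rw [h1]
        _ = (mk s * mk a) * (mk a ^ 2 * (u : _)) := by ring
        _ = mk a ^ 2 * (u : _) := by rw [hsa, one_mul]
    calc (u : R ⧸ Ideal.span {Δ}) = (mk s * mk a) ^ 2 * (u : _) := by rw [hsa, one_pow, one_mul]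
      _ = mk s ^ 2 * (mk a ^ 2 * (u : _)) := by ring
      _ = mk s ^ 2 * mk T := by rw [h2']
      _ = mk (s ^ 2 * T) := by simp only [map_mul, map_pow]
      _ = _ := congrArg mk (by ring)
end

section
/- Let R be a principal ideal domain of characteristic different from 2, let Δ ∈ R be nonzero, and let π, μ ∈ R satisfy Δ = π² + 4μ. Let [a₁,b₁,c₁] and [a₂,b₂,c₂] be primitive binary quadratic forms over R of discriminant Δ with b₁ ≡ b₂ ≡ π (mod 2R), with a₁, a₂ nonzero and coprime to Δ. If [a₁,b₁,c₁] and [a₂,b₂,c₂] are GL₂ᵗʷ-equivalent, then the residue of a₁·a₂ in (R/ΔR)ˣ lies in H₀ (equivalently, ā₁·H₀ = ā₂·H₀; this is the well-definedness of the Genus Theory map on equivalence classes). -/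
/-- **Well-definedness of the Genus Theory map.**
`R` a PID of characteristic ≠ 2, `Δ ≠ 0`, `Δ = π² + 4μ`. If two primitive
forms `[a₁,b₁,c₁]`, `[a₂,b₂,c₂]` of discriminant `Δ` with `bᵢ ≡ π (mod 2R)`
and `aᵢ` nonzero coprime to `Δ` are `GL₂ᵗʷ`-equivalent, then the residue of
`a₁·a₂` lies in `H₀` (i.e. equals `ε·(x² + πxy − μy²)` mod `Δ` for some unit
`ε` of `R` and some `x, y ∈ R`); equivalently `ā₁·H₀ = ā₂·H₀`. -/
theorem genus_map_well_defined
    (R : Type*) [CommRing R] [IsDomain R] [IsPrincipalIdealRing R]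
    (h2 : (2 : R) ≠ 0)
    (Δ π μ : R) (hΔ0 : Δ ≠ 0) (hΔ : Δ = π ^ 2 + 4 * μ)
    (a₁ b₁ c₁ a₂ b₂ c₂ e₁ e₂ : R)
    (hprim₁ : Ideal.span {a₁, b₁, c₁} = (⊤ : Ideal R))
    (hprim₂ : Ideal.span {a₂, b₂, c₂} = (⊤ : Ideal R))
    (hdisc₁ : b₁ ^ 2 - 4 * a₁ * c₁ = Δ)
    (hdisc₂ : b₂ ^ 2 - 4 * a₂ * c₂ = Δ)
    (he₁ : b₁ - π = 2 * e₁) (he₂ : b₂ - π = 2 * e₂)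
    (ha₁0 : a₁ ≠ 0) (ha₂0 : a₂ ≠ 0)
    (ha₁Δ : IsCoprime a₁ Δ) (ha₂Δ : IsCoprime a₂ Δ)
    (hequiv : ∃ M : Matrix (Fin 2) (Fin 2) R, IsUnit M.det ∧
      ∀ x y : R,
        M.det * (a₂ * x ^ 2 + b₂ * x * y + c₂ * y ^ 2) =
          a₁ * (M 0 0 * x + M 0 1 * y) ^ 2
            + b₁ * (M 0 0 * x + M 0 1 * y) * (M 1 0 * x + M 1 1 * y)
            + c₁ * (M 1 0 * x + M 1 1 * y) ^ 2) :
    ∃ ε : Rˣ, ∃ x y : R,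
      Ideal.Quotient.mk (Ideal.span {Δ}) (a₁ * a₂) =
        Ideal.Quotient.mk (Ideal.span {Δ}) ((ε : R) * (x ^ 2 + π * x * y - μ * y ^ 2)) := by
  obtain ⟨M, hdet, hM⟩ := hequiv
  have key : e₁ ^ 2 + π * e₁ - μ = a₁ * c₁ := by
    have h4 : (2 : R) * ((2 : R) * (e₁ ^ 2 + π * e₁ - μ)) =
        (2 : R) * ((2 : R) * (a₁ * c₁)) := by
      linear_combination hdisc₁ + hΔ - (b₁ + π + 2 * e₁) * he₁
    exact mul_left_cancel₀ h2 (mul_left_cancel₀ h2 h4)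
  refine ⟨hdet.unit⁻¹, a₁ * M 0 0 + e₁ * M 1 0, M 1 0, ?_⟩
  congr 1
  rw [eq_comm, Units.inv_mul_eq_iff_eq_mul, hdet.unit_spec]
  linear_combination (-a₁) * (hM 1 0) + M 1 0 ^ 2 * key - a₁ * M 0 0 * M 1 0 * he₁
end

section
/- Let R be a principal ideal domain with 2 ≠ 0 and let [a,b,c] be a primitive binary quadratic form over R of discriminant zero, i.e. b² = 4ac. Then [a,b,c] is GL₂ᵗʷ-equivalent to the form [1,0,0]; in other words, the set of twisted equivalence classes of primitive binary quadratic forms of discriminant 0 over R is trivial. -/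
/-- **Triviality of the class group of discriminant 0.**
Over a PID `R` with `2 ≠ 0`, every primitive binary quadratic form `[a,b,c]`
of discriminant zero (`b² = 4ac`) is `GL₂ᵗʷ`-equivalent to `[1,0,0]`:
there is `M ∈ GL₂(R)` with `det(M)·(ax² + bxy + cy²) = (M₀₀x + M₀₁y)²`. -/
theorem discriminant_zero_class_trivial
    (R : Type*) [CommRing R] [IsDomain R] [IsPrincipalIdealRing R]
    (h2 : (2 : R) ≠ 0)
    (a b c : R)
    (hprim : Ideal.span {a, b, c} = (⊤ : Ideal R))
    (hdisc : b ^ 2 = 4 * a * c) :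
    ∃ M : Matrix (Fin 2) (Fin 2) R, IsUnit M.det ∧
      ∀ x y : R,
        M.det * (a * x ^ 2 + b * x * y + c * y ^ 2) =
          (M 0 0 * x + M 0 1 * y) ^ 2 := by
  classical
  -- Bezout combination from primitivity
  have h1 : (1 : R) ∈ Ideal.span ({a, b, c} : Set R) := by
    rw [hprim]; trivial
  rw [show ({a, b, c} : Set R) = insert a (insert b {c}) from rfl,
    Ideal.mem_span_insert] at h1
  obtain ⟨x, z1, hz1, hco1⟩ := h1
  rw [Ideal.mem_span_insert] at hz1
  obtain ⟨y, z2, hz2, hco2⟩ := hz1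
  rw [Ideal.mem_span_singleton] at hz2
  obtain ⟨z, hz⟩ := hz2
  have hcombo : x * a + y * b + c * z = 1 := by
    rw [hco1, hco2, hz]; ring
  -- 2 divides b
  have h2b : (2 : R) ∣ b := by
    have h4 : (2 : R) ^ 2 ∣ b ^ 2 := ⟨a * c, by linear_combination hdisc⟩
    exact (IsIntegrallyClosed.pow_dvd_pow_iff (two_ne_zero (α:=ℕ))).mp h4
  obtain ⟨β, hβ⟩ := h2b
  have hac : a * c = β ^ 2 := by
    have h4 : (4 : R) ≠ 0 := by
      intro h; apply h2
      have : (2 : R) * 2 = 0 := by linear_combination h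
      rcases mul_eq_zero.mp this with h | h <;> exact h
    apply mul_left_cancel₀ h4
    linear_combination -hdisc + (2 * β + b) * hβ
  rcases eq_or_ne a 0 with ha | ha
  · -- a = 0 : then b = 0 and c is a unit
    subst ha
    have hb0 : b = 0 := by
      have : b ^ 2 = 0 := by linear_combination hdisc
      exact (pow_eq_zero_iff (two_ne_zero (α:=ℕ))).mp this
    subst hb0
    have hcu : IsUnit c := by
      refine IsUnit.of_mul_eq_one (a := c) z ?_
      linear_combination hcombo
    obtain ⟨u, rfl⟩ := hcu
    refine ⟨!![0, 1; -(↑u⁻¹ : R), 0], ?_, ?_⟩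
    · rw [Matrix.det_fin_two_of]
      have : (0 * 0 - 1 * -(↑u⁻¹ : R)) = (↑u⁻¹ : R) := by ring
      rw [this]; exact u⁻¹.isUnit
    · intro X Y
      rw [Matrix.det_fin_two_of]
      simp only [Matrix.of_apply, Matrix.cons_val', Matrix.cons_val_zero, Matrix.empty_val',
        Matrix.cons_val_fin_one, Matrix.cons_val_one, Matrix.head_cons, Matrix.head_fin_const]
      linear_combination Y ^ 2 * u.inv_mul
  rcases eq_or_ne c 0 with hc | hc
  · -- c = 0 : then b = 0 and a is a unit
    subst hc
    have hb0 : b = 0 := by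
      have : b ^ 2 = 0 := by linear_combination hdisc
      exact (pow_eq_zero_iff (two_ne_zero (α:=ℕ))).mp this
    subst hb0
    have hau : IsUnit a := by
      refine IsUnit.of_mul_eq_one (a := a) x ?_
      linear_combination hcombo
    obtain ⟨u, rfl⟩ := hau
    refine ⟨!![1, 0; 0, (↑u⁻¹ : R)], ?_, ?_⟩
    · rw [Matrix.det_fin_two_of]
      have : (1 * (↑u⁻¹ : R) - 0 * 0) = (↑u⁻¹ : R) := by ring
      rw [this]; exact u⁻¹.isUnit
    · intro X Y
      rw [Matrix.det_fin_two_of]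
      simp only [Matrix.of_apply, Matrix.cons_val', Matrix.cons_val_zero, Matrix.empty_val',
        Matrix.cons_val_fin_one, Matrix.cons_val_one, Matrix.head_cons, Matrix.head_fin_const]
      linear_combination X ^ 2 * u.inv_mul
  -- main case : a ≠ 0, c ≠ 0
  letI : GCDMonoid R := IsBezout.toGCDDomain R
  -- a and c are coprime
  have hcop : IsCoprime a c := by
    rw [← gcd_isUnit_iff]
    apply isUnit_of_dvd_one
    rw [← hcombo]
    have hgb : gcd a c ∣ b := by
      have hg2 : gcd a c ^ 2 ∣ β ^ 2 := by
        rw [← hac, pow_two]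
        exact mul_dvd_mul (gcd_dvd_left a c) (gcd_dvd_right a c)
      have : gcd a c ∣ β := (IsIntegrallyClosed.pow_dvd_pow_iff (two_ne_zero (α:=ℕ))).mp hg2
      exact hβ ▸ this.mul_left 2
    exact dvd_add (dvd_add ((gcd_dvd_left a c).mul_left x) (hgb.mul_left y))
      ((gcd_dvd_right a c).mul_right z)
  obtain ⟨p, u, hu⟩ := exists_associated_pow_of_mul_eq_pow' hcop hac
  -- hu : p ^ 2 * u = a
  have hp0 : p ≠ 0 := by
    rintro rfl
    apply ha; rw [← hu]; ring
  have hpβ : p ∣ β := by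
    refine (IsIntegrallyClosed.pow_dvd_pow_iff (R := R) (two_ne_zero (α:=ℕ))).mp ?_
    rw [← hac, ← hu]
    exact ⟨(↑u : R) * c, by ring⟩
  obtain ⟨t, ht⟩ := hpβ
  have htt : (↑u : R) * c = t ^ 2 := by
    apply mul_left_cancel₀ (pow_ne_zero 2 hp0)
    linear_combination c * hu + hac + (β + p * t) * ht
  set v : R := (↑u⁻¹ : R) with hv
  have hiu : v * (↑u : R) = 1 := u.inv_mul
  have hm01c : v * t ∣ c := ⟨t, by linear_combination v * htt - c * hiu⟩
  have hpa : p ∣ a := ⟨p * (↑u : R), by rw [← hu]; ring⟩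
  have hcop2 : IsCoprime p (v * t) :=
    (hcop.of_isCoprime_of_dvd_left hpa).of_isCoprime_of_dvd_right hm01c
  obtain ⟨s, r, hbez⟩ := hcop2
  refine ⟨!![p, v * t; -(v * r), v * s], ?_, ?_⟩
  · rw [Matrix.det_fin_two_of]
    have hdet : p * (v * s) - v * t * -(v * r) = v := by
      linear_combination v * hbez
    rw [hdet]; exact u⁻¹.isUnit
  · intro X Y
    rw [Matrix.det_fin_two_of]
    simp only [Matrix.of_apply, Matrix.cons_val', Matrix.cons_val_zero, Matrix.empty_val',
      Matrix.cons_val_fin_one, Matrix.cons_val_one, Matrix.head_cons, Matrix.head_fin_const]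
    have hdet : p * (v * s) - v * t * -(v * r) = v := by
      linear_combination v * hbez
    rw [hdet]
    have E1 : v * a = p ^ 2 := by
      linear_combination -v * hu + p ^ 2 * hiu
    have E2 : v * b = 2 * p * (v * t) := by
      rw [hβ, ht]; ring
    have E3 : v * c = (v * t) ^ 2 := by
      linear_combination v * v * htt - v * c * hiu
    linear_combination X ^ 2 * E1 + X * Y * E2 + Y ^ 2 * E3
end

section
/- Let K be a number field and S a finite set of nonzero prime ideals of O_K such that the ring of S-integers O := O_{K,S} is a principal ideal domain. Let f ∈ O_K[X] be monic, squarefree, of odd degree at least 3. Let A := O[X][Y]/⟨Y² − f⟩ and B := K[X][Y]/⟨Y² − f⟩, with the canonical ring homomorphism A → B induced by the inclusion O ↪ K. If I is an ideal of A which is invertible as a fractional ideal of A, and the extension ideal I·B (the ideal of B generated by the image of I) is principal, then I is a principal ideal of A. (This is the injectivity of the restriction-to-the-generic-fibre map Pic(A) → Pic(B).) -/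
open Polynomial FractionalIdeal IsDedekindDomain NumberField

open scoped nonZeroDivisors

/-- The ring of `S`-integers of a number field `K`. -/
noncomputable abbrev SInt (K : Type*) [Field K] [NumberField K]
    (S : Finset (HeightOneSpectrum (𝓞 K))) : Type _ :=
  ((S : Set (HeightOneSpectrum (𝓞 K))).integer K)

/-- `R[X][Y]/⟨Y² − f⟩` for a commutative ring `R`. -/
noncomputable def HypRingR (R : Type*) [CommRing R] (f : Polynomial R) : Type _ :=
  Polynomial (Polynomial R) ⧸ Ideal.span {(X : Polynomial (Polynomial R)) ^ 2 - C f}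

noncomputable instance (R : Type*) [CommRing R] (f : Polynomial R) : CommRing (HypRingR R f) :=
  Ideal.Quotient.commRing _

/-- The quotient map `R[X][Y] → R[X][Y]/⟨Y² − f⟩`. -/
noncomputable def HypRingR.mk (R : Type*) [CommRing R] (f : Polynomial R) :
    Polynomial (Polynomial R) →+* HypRingR R f :=
  Ideal.Quotient.mk _

/-- Functoriality of `R[X][Y]/⟨Y² − f⟩` in the base ring `R`: a ring homomorphism
`φ : R → S` induces `R[X][Y]/⟨Y² − f⟩ → S[X][Y]/⟨Y² − f^φ⟩`. -/
noncomputable def HypMap (R S : Type*) [CommRing R] [CommRing S] (φ : R →+* S)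
    (f : Polynomial R) : HypRingR R f →+* HypRingR S (f.map φ) :=
  Ideal.Quotient.lift _
    ((HypRingR.mk S (f.map φ)).comp (Polynomial.mapRingHom (Polynomial.mapRingHom φ)))
    (by
      intro p hp
      obtain ⟨q, hq⟩ := Ideal.mem_span_singleton.mp hp
      obtain rfl := hq
      have hmap : (Polynomial.mapRingHom (Polynomial.mapRingHom φ))
          ((X : Polynomial (Polynomial R)) ^ 2 - C f) =
          (X : Polynomial (Polynomial S)) ^ 2 - C (f.map φ) := by
        simp [Polynomial.map_pow]
      have h0 : (HypRingR.mk S (f.map φ))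
          ((X : Polynomial (Polynomial S)) ^ 2 - C (f.map φ)) = 0 := by
        apply Ideal.Quotient.eq_zero_iff_mem.mpr
        exact Ideal.subset_span rfl
      show (HypRingR.mk S (f.map φ))
          ((Polynomial.mapRingHom (Polynomial.mapRingHom φ))
            (((X : Polynomial (Polynomial R)) ^ 2 - C f) * q)) = 0
      rw [_root_.map_mul, _root_.map_mul, hmap, h0, zero_mul])



set_option linter.unusedSectionVars false

section HypPrime

variable {R : Type*} [CommRing R] [IsDomain R] [UniqueFactorizationMonoid R]

lemma hyp_prime (g : Polynomial R) (hodd : Odd g.natDegree) :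
    Prime ((X : Polynomial (Polynomial R)) ^ 2 - C g) := by
  rw [← UniqueFactorizationMonoid.irreducible_iff_prime]
  have hmono : ((X : Polynomial (Polynomial R)) ^ 2 - C g).Monic :=
    monic_X_pow_sub_C g two_ne_zero
  rw [hmono.irreducible_iff_irreducible_map_fraction_map
    (K := FractionRing (Polynomial R))]
  have hmap : ((X : Polynomial (Polynomial R)) ^ 2 - C g).map
      (algebraMap (Polynomial R) (FractionRing (Polynomial R)))
      = X ^ 2 - C (algebraMap (Polynomial R) (FractionRing (Polynomial R)) g) := by
    simp [Polynomial.map_pow]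
  rw [hmap]
  refine X_pow_sub_C_irreducible_of_prime Nat.prime_two ?_
  intro b hb
  have hint : IsIntegral (Polynomial R) b :=
    ⟨X ^ 2 - C g, hmono, by simp [hb]⟩
  obtain ⟨y, hy⟩ := IsIntegrallyClosed.isIntegral_iff.mp hint
  have heq : algebraMap (Polynomial R) (FractionRing (Polynomial R)) (y ^ 2)
      = algebraMap (Polynomial R) (FractionRing (Polynomial R)) g := by
    rw [map_pow, hy, hb]
  have hyg : y ^ 2 = g := IsFractionRing.injective (Polynomial R) _ heq
  rw [← hyg, natDegree_pow] at hodd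
  obtain ⟨m, hm⟩ := hodd
  omega

lemma hyp_span_prime (g : Polynomial R) (hodd : Odd g.natDegree) :
    (Ideal.span {(X : Polynomial (Polynomial R)) ^ 2 - C g}).IsPrime :=
  (Ideal.span_singleton_prime (hyp_prime g hodd).ne_zero).mpr (hyp_prime g hodd)

lemma hyp_isDomain (g : Polynomial R) (hodd : Odd g.natDegree) : IsDomain (HypRingR R g) := by
  haveI := hyp_span_prime g hodd
  exact Ideal.Quotient.isDomain _

end HypPrime

lemma mk_CC_ne_zero {R : Type*} [CommRing R] [IsDomain R] (g : Polynomial R) {r : R}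
    (hr : r ≠ 0) : HypRingR.mk R g (C (C r)) ≠ 0 := by
  intro h
  have h' : Ideal.Quotient.mk (Ideal.span {(X : Polynomial (Polynomial R)) ^ 2 - C g})
      (C (C r)) = 0 := h
  have hmem := Ideal.Quotient.eq_zero_iff_mem.mp h'
  obtain ⟨q, hq⟩ := Ideal.mem_span_singleton.mp hmem
  have hgne : ((X : Polynomial (Polynomial R)) ^ 2 - C g) ≠ 0 :=
    (monic_X_pow_sub_C g two_ne_zero).ne_zero
  have hqne : q ≠ 0 := by
    rintro rfl
    rw [mul_zero] at hq
    exact hr (by simpa using hq)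
  have hdeg := congrArg natDegree hq
  rw [natDegree_C, natDegree_mul hgne hqne, natDegree_X_pow_sub_C] at hdeg
  omega

lemma HypMap_mk {R S : Type*} [CommRing R] [CommRing S] (φ : R →+* S) (f : Polynomial R)
    (p : Polynomial (Polynomial R)) :
    HypMap R S φ f (HypRingR.mk R f p)
      = HypRingR.mk S (f.map φ) (p.map (Polynomial.mapRingHom φ)) := rfl

lemma prime_iotaA {O : Type*} [CommRing O] [IsDomain O] [IsPrincipalIdealRing O]
    (f' : Polynomial O) (hmonic : f'.Monic) (hodd : Odd f'.natDegree)
    {π : O} (hπ : Prime π) :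
    Prime (HypRingR.mk O f' (C (C π))) := by
  haveI hmax : (Ideal.span {π}).IsMaximal :=
    PrincipalIdealRing.isMaximal_of_irreducible hπ.irreducible
  letI : Field (O ⧸ Ideal.span {π}) := Ideal.Quotient.field _
  set q : O →+* O ⧸ Ideal.span {π} := Ideal.Quotient.mk (Ideal.span {π}) with hqdef
  have hodd' : Odd ((f'.map q).natDegree) := by
    rwa [hmonic.natDegree_map]
  haveI hdom : IsDomain (HypRingR (O ⧸ Ideal.span {π}) (f'.map q)) :=
    hyp_isDomain _ hodd'
  set g : Polynomial (Polynomial O) := (X : Polynomial (Polynomial O)) ^ 2 - C f' with hgdef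
  set gk : Polynomial (Polynomial (O ⧸ Ideal.span {π})) :=
    (X : Polynomial (Polynomial (O ⧸ Ideal.span {π}))) ^ 2 - C (f'.map q) with hgkdef
  set Ψq := Polynomial.mapRingHom (Polynomial.mapRingHom q) with hΨqdef
  set ψ₀ := (HypRingR.mk (O ⧸ Ideal.span {π}) (f'.map q)).comp Ψq with hψ₀def
  have hΨg : Ψq g = gk := by
    simp [hΨqdef, hgdef, hgkdef, Polynomial.map_pow]
  have hkerΨq : RingHom.ker Ψq = Ideal.span {(C (C π) : Polynomial (Polynomial O))} := by
    rw [hΨqdef, Polynomial.ker_mapRingHom, Polynomial.ker_mapRingHom, hqdef, Ideal.mk_ker,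
      Ideal.map_span, Ideal.map_span, Set.image_singleton, Set.image_singleton]
  have hψ₀ : RingHom.ker ψ₀ = Ideal.span {g} ⊔ Ideal.span {(C (C π) : Polynomial (Polynomial O))} := by
    apply le_antisymm
    · intro p hp
      have hp0 : HypRingR.mk (O ⧸ Ideal.span {π}) (f'.map q) (Ψq p) = 0 := RingHom.mem_ker.mp hp
      have hp' := Ideal.Quotient.eq_zero_iff_mem.mp hp0
      obtain ⟨qq, hqq⟩ := Ideal.mem_span_singleton.mp hp'
      obtain ⟨q1, rfl⟩ : ∃ q1, Ψq q1 = qq := by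
        have hsurj : Function.Surjective Ψq := by
          simpa [hΨqdef, Polynomial.coe_mapRingHom] using
            (Polynomial.map_surjective _
              (Polynomial.map_surjective _ Ideal.Quotient.mk_surjective))
        exact hsurj qq
      have hker2 : p - g * q1 ∈ RingHom.ker Ψq := by
        rw [RingHom.mem_ker, map_sub, RingHom.map_mul Ψq, hΨg, ← hqq, sub_self]
      rw [hkerΨq] at hker2
      have : p = g * q1 + (p - g * q1) := by ring
      rw [this]
      exact Ideal.add_mem _
        (Ideal.mem_sup_left (Ideal.mem_span_singleton.mpr ⟨q1, rfl⟩))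
        (Ideal.mem_sup_right hker2)
    · rw [sup_le_iff]
      constructor
      · rw [Ideal.span_le, Set.singleton_subset_iff]
        show ψ₀ g = 0
        rw [hψ₀def, RingHom.comp_apply, hΨg]
        exact Ideal.Quotient.eq_zero_iff_mem.mpr (Ideal.subset_span rfl)
      · rw [Ideal.span_le, Set.singleton_subset_iff]
        show ψ₀ (C (C π)) = 0
        have : Ψq (C (C π)) = 0 := by
          simp [hΨqdef, hqdef, Ideal.Quotient.eq_zero_iff_mem.mpr
            (Ideal.subset_span rfl : π ∈ Ideal.span {π})]
        rw [hψ₀def, RingHom.comp_apply, this, RingHom.map_zero]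
  have hH : Ideal.span {g} ≤ RingHom.ker ψ₀ := by
    rw [hψ₀]; exact le_sup_left
  have hker : RingHom.ker (HypMap O (O ⧸ Ideal.span {π}) q f')
      = (RingHom.ker ψ₀).map (Ideal.Quotient.mk (Ideal.span {g})) :=
    Ideal.ker_quotient_lift ψ₀ hH
  have hmkg : Ideal.Quotient.mk (Ideal.span {g}) g = 0 :=
    Ideal.Quotient.eq_zero_iff_mem.mpr (Ideal.subset_span rfl)
  have hkerΦ : RingHom.ker (HypMap O (O ⧸ Ideal.span {π}) q f')
      = Ideal.span {HypRingR.mk O f' (C (C π))} := by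
    rw [hker, hψ₀, Ideal.map_sup, Ideal.map_span, Ideal.map_span, Set.image_singleton,
      Set.image_singleton, hmkg, Ideal.span_singleton_eq_bot.mpr rfl, bot_sup_eq]
    rfl
  haveI hprime : (RingHom.ker (HypMap O (O ⧸ Ideal.span {π}) q f')).IsPrime :=
    RingHom.ker_isPrime _
  rw [hkerΦ] at hprime
  exact (Ideal.span_singleton_prime (mk_CC_ne_zero f' hπ.ne_zero)).mp hprime
section IdealHelpers

variable {A : Type*} [CommRing A] [IsDomain A]

lemma spanCancel {x : A} (hx : x ≠ 0) {P Q : Ideal A}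
    (h : Ideal.span {x} * P = Ideal.span {x} * Q) : P = Q := by
  have key : ∀ P Q : Ideal A, Ideal.span {x} * P = Ideal.span {x} * Q → P ≤ Q := by
    intro P Q h a ha
    have h1 : x * a ∈ Ideal.span {x} * Q := by
      rw [← h]
      exact Ideal.mem_span_singleton_mul.mpr ⟨a, ha, rfl⟩
    obtain ⟨z, hz, hxz⟩ := Ideal.mem_span_singleton_mul.mp h1
    obtain rfl : z = a := mul_left_cancel₀ hx hxz
    exact hz
  exact le_antisymm (key _ _ h) (key _ _ h.symm)

lemma span_colon_eq {d : A} {T : Ideal A} (h : T ≤ Ideal.span {d}) :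
    Ideal.span {d} * (T.colon (Ideal.span {d})) = T := by
  apply le_antisymm
  · rw [Ideal.mul_le]
    intro r hr s hs
    have := (Submodule.mem_colon.mp hs) r hr
    rwa [smul_eq_mul, mul_comm] at this
  · intro y hy
    obtain ⟨z, hz⟩ := Ideal.mem_span_singleton.mp (h hy)
    refine Ideal.mem_span_singleton_mul.mpr ⟨z, ?_, hz.symm⟩
    refine Submodule.mem_colon.mpr ?_
    intro p hp
    obtain ⟨w, hw⟩ := Ideal.mem_span_singleton.mp hp
    have : y * w ∈ T := Ideal.mul_mem_right _ _ hy
    rw [smul_eq_mul, hw]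
    have heq : z * (d * w) = y * w := by rw [hz]; ring
    rwa [heq]

lemma engine (s : Multiset A) :
    (∀ p ∈ s, Prime p) → ∀ (w : A), IsUnit w → ∀ (M Q : Ideal A),
      M * Q = Ideal.span {w * s.prod} → M.IsPrincipal := by
  induction s using Multiset.induction_on with
  | empty =>
    intro _ w hw M Q h
    rw [Multiset.prod_zero, mul_one] at h
    have htop : M * Q = ⊤ := by rw [h, Ideal.span_singleton_eq_top.mpr hw]
    have hM : M = ⊤ := top_unique (htop ▸ Ideal.mul_le_left)
    exact ⟨1, by rw [hM, Ideal.submodule_span_eq, Ideal.span_singleton_one]⟩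
  | cons p s ih =>
    intro hs w hw M Q h
    have hp : Prime p := hs p (Multiset.mem_cons_self p s)
    have hs' : ∀ q ∈ s, Prime q := fun q hq => hs q (Multiset.mem_cons_of_mem hq)
    rw [Multiset.prod_cons, show w * (p * s.prod) = p * (w * s.prod) by ring,
      ← Ideal.span_singleton_mul_span_singleton] at h
    have hsub : M ≤ Ideal.span {p} ∨ Q ≤ Ideal.span {p} := by
      by_contra hc
      push_neg at hc
      obtain ⟨hM, hQ⟩ := hc
      obtain ⟨x, hxM, hxp⟩ := SetLike.not_le_iff_exists.mp hM
      obtain ⟨y, hyQ, hyp⟩ := SetLike.not_le_iff_exists.mp hQ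
      have hxy : x * y ∈ Ideal.span {p} := by
        have h1 : x * y ∈ M * Q := Ideal.mul_mem_mul hxM hyQ
        rw [h] at h1
        exact Ideal.mul_le_left h1
      rcases hp.2.2 x y (Ideal.mem_span_singleton.mp hxy) with hd | hd
      · exact hxp (Ideal.mem_span_singleton.mpr hd)
      · exact hyp (Ideal.mem_span_singleton.mpr hd)
    rcases hsub with hMle | hQle
    · have hM2 := span_colon_eq hMle
      set M' := M.colon (Ideal.span {p}) with hM'def
      have heq : Ideal.span {p} * (M' * Q) =
          Ideal.span {p} * Ideal.span {w * s.prod} := by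
        rw [← mul_assoc, hM2, h]
      obtain ⟨m', hm'⟩ := (ih hs' w hw M' Q (spanCancel hp.ne_zero heq)).principal
      refine ⟨p * m', ?_⟩
      rw [← hM2, hm', Ideal.submodule_span_eq, Ideal.span_singleton_mul_span_singleton,
        Ideal.submodule_span_eq]
    · have hQ2 := span_colon_eq hQle
      set Q' := Q.colon (Ideal.span {p}) with hQ'def
      have heq : Ideal.span {p} * (M * Q') =
          Ideal.span {p} * Ideal.span {w * s.prod} := by
        rw [mul_left_comm, hQ2, h]
      exact ih hs' w hw M Q' (spanCancel hp.ne_zero heq)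

end IdealHelpers

theorem main_generic (O L : Type*) [CommRing O] [IsDomain O] [IsPrincipalIdealRing O]
    [Field L] [Algebra O L]
    (hinj : Function.Injective (algebraMap O L))
    (hden : ∀ x : L, ∃ t : O, t ≠ 0 ∧ ∃ y : O, algebraMap O L y = algebraMap O L t * x)
    (f' : Polynomial O) (hmonic : f'.Monic) (hodd : Odd f'.natDegree)
    (I : Ideal (HypRingR O f'))
    (hinv : IsUnit (I : FractionalIdeal (HypRingR O f')⁰ (FractionRing (HypRingR O f'))))
    (hprinc : (I.map (HypMap O L (algebraMap O L) f')).IsPrincipal) :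
    I.IsPrincipal := by
  classical
  set ι := algebraMap O L with hιdef
  haveI hA : IsDomain (HypRingR O f') := hyp_isDomain f' hodd
  haveI hB : IsDomain (HypRingR L (f'.map ι)) := hyp_isDomain _ (by rwa [hmonic.natDegree_map])
  set φ := HypMap O L ι f' with hφdef
  set ιA : O →+* HypRingR O f' :=
    (HypRingR.mk O f').comp ((C : Polynomial O →+* Polynomial (Polynomial O)).comp
      (C : O →+* Polynomial O)) with hιAdef
  set ιB : O →+* HypRingR L (f'.map ι) := φ.comp ιA with hιBdef
  have hιA : ∀ t : O, ιA t = HypRingR.mk O f' (C (C t)) := fun t => rfl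
  have hφιA : ∀ t : O, φ (ιA t) = HypRingR.mk L (f'.map ι) (C (C (ι t))) := by
    intro t
    rw [hιA, hφdef, HypMap_mk]
    simp
  have hιA0 : ∀ t : O, t ≠ 0 → ιA t ≠ 0 := by
    intro t ht
    rw [hιA]
    exact mk_CC_ne_zero f' ht
  have hιBunit : ∀ t : O, t ≠ 0 → IsUnit (ιB t) := by
    intro t ht
    have hne : ι t ≠ 0 := fun h => ht (hinj (by rw [h, RingHom.map_zero]))
    have : ιB t = ((HypRingR.mk L (f'.map ι)).comp
        ((C : Polynomial L →+* Polynomial (Polynomial L)).comp (C : L →+* Polynomial L)))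
        (ι t) := by
      rw [hιBdef, RingHom.comp_apply, hφιA]
      rfl
    rw [this]
    exact (isUnit_iff_ne_zero.mpr hne).map _
  have hιB0 : ∀ t : O, t ≠ 0 → ιB t ≠ 0 := fun t ht => (hιBunit t ht).ne_zero
  -- denominator clearing, polynomial level
  have hden1 : ∀ p : Polynomial L, ∃ t : O, t ≠ 0 ∧ ∃ qp : Polynomial O,
      qp.map ι = C (ι t) * p := by
    intro p
    induction p using Polynomial.induction_on' with
    | monomial n x =>
      obtain ⟨t, ht, y, hy⟩ := hden x
      refine ⟨t, ht, monomial n y, ?_⟩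
      rw [Polynomial.map_monomial, hy, C_mul_monomial]
    | add p r hp hr =>
      obtain ⟨tp, htp, qp, hqp⟩ := hp
      obtain ⟨tr, htr, qr, hqr⟩ := hr
      refine ⟨tp * tr, mul_ne_zero htp htr, C tr * qp + C tp * qr, ?_⟩
      rw [Polynomial.map_add, Polynomial.map_mul, Polynomial.map_mul, Polynomial.map_C,
        Polynomial.map_C, hqp, hqr, RingHom.map_mul ι]
      simp only [C_mul]
      ring
  have hden2 : ∀ p : Polynomial (Polynomial L), ∃ t : O, t ≠ 0 ∧
      ∃ qp : Polynomial (Polynomial O),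
      qp.map (mapRingHom ι) = C (C (ι t)) * p := by
    intro p
    induction p using Polynomial.induction_on' with
    | monomial n x =>
      obtain ⟨t, ht, qx, hqx⟩ := hden1 x
      refine ⟨t, ht, monomial n qx, ?_⟩
      rw [Polynomial.map_monomial, coe_mapRingHom, hqx, C_mul_monomial]
    | add p r hp hr =>
      obtain ⟨tp, htp, qp, hqp⟩ := hp
      obtain ⟨tr, htr, qr, hqr⟩ := hr
      refine ⟨tp * tr, mul_ne_zero htp htr, C (C tr) * qp + C (C tp) * qr, ?_⟩
      rw [Polynomial.map_add, Polynomial.map_mul, Polynomial.map_mul, Polynomial.map_C,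
        Polynomial.map_C, hqp, hqr, coe_mapRingHom, Polynomial.map_C, RingHom.map_mul ι]
      simp only [C_mul, Polynomial.map_C]
      ring
  -- denominator clearing in B
  have hdenB : ∀ b : HypRingR L (f'.map ι), ∃ t : O, t ≠ 0 ∧
      ∃ a : HypRingR O f', φ a = ιB t * b := by
    intro b
    obtain ⟨p, rfl⟩ := Ideal.Quotient.mk_surjective b
    obtain ⟨t, ht, qp, hqp⟩ := hden2 p
    refine ⟨t, ht, HypRingR.mk O f' qp, ?_⟩
    rw [hφdef, HypMap_mk, hqp]
    rw [show ιB t = HypRingR.mk L (f'.map ι) (C (C (ι t))) from hφιA t]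
    exact RingHom.map_mul _ _ _
  -- the fiber map fact
  have hgmap : (((X : Polynomial (Polynomial O)) ^ 2 - C f').map (mapRingHom ι))
      = (X : Polynomial (Polynomial L)) ^ 2 - C (f'.map ι) := by
    simp [Polynomial.map_pow]
  -- injectivity of φ
  have hφinj : Function.Injective φ := by
    rw [injective_iff_map_eq_zero]
    intro x hx
    obtain ⟨p, rfl⟩ := Ideal.Quotient.mk_surjective x
    have hx' : Ideal.Quotient.mk
        (Ideal.span {(X : Polynomial (Polynomial L)) ^ 2 - C (f'.map ι)})
        (p.map (mapRingHom ι)) = 0 := by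
      rw [show (Ideal.Quotient.mk _ p : HypRingR O f') = HypRingR.mk O f' p from rfl] at hx
      rw [hφdef, HypMap_mk] at hx
      exact hx
    have hmem := Ideal.Quotient.eq_zero_iff_mem.mp hx'
    obtain ⟨qq, hqq⟩ := Ideal.mem_span_singleton.mp hmem
    obtain ⟨t, ht, q0, hq0⟩ := hden2 qq
    have hmapeq : ((C (C t)) * p - ((X : Polynomial (Polynomial O)) ^ 2 - C f') * q0).map
        (mapRingHom ι) = 0 := by
      rw [Polynomial.map_sub, Polynomial.map_mul, Polynomial.map_mul, Polynomial.map_C,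
        hq0, hgmap, hqq, coe_mapRingHom, Polynomial.map_C]
      ring
    have hzero : (C (C t)) * p - ((X : Polynomial (Polynomial O)) ^ 2 - C f') * q0 = 0 := by
      apply Polynomial.map_injective (mapRingHom ι)
        (by rw [coe_mapRingHom]; exact Polynomial.map_injective ι hinj)
      rw [hmapeq, Polynomial.map_zero]
    have hsub : (C (C t)) * p = ((X : Polynomial (Polynomial O)) ^ 2 - C f') * q0 :=
      sub_eq_zero.mp hzero
    have hmk : ιA t * Ideal.Quotient.mk _ p = (0 : HypRingR O f') := by
      rw [hιA]
      change HypRingR.mk O f' ((C (C t)) * p) = 0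
      rw [hsub]
      exact Ideal.Quotient.eq_zero_iff_mem.mpr
        (Ideal.mul_mem_right _ _ (Ideal.subset_span rfl))
    rcases mul_eq_zero.mp hmk with h | h
    · exact absurd h (hιA0 t ht)
    · exact h
  -- pulling back ideal membership
  have hpull : ∀ (J : Ideal (HypRingR O f')) (y : HypRingR L (f'.map ι)),
      y ∈ J.map φ → ∃ s : O, s ≠ 0 ∧ ∃ x ∈ J, φ x = ιB s * y := by
    intro J y hy
    rw [← Ideal.span_eq J, Ideal.map_span] at hy
    refine Submodule.span_induction ?_ ?_ ?_ ?_ hy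
    · rintro y ⟨x, hx, rfl⟩
      exact ⟨1, one_ne_zero, x, hx, by rw [RingHom.map_one ιB, one_mul]⟩
    · exact ⟨1, one_ne_zero, 0, J.zero_mem, by simp⟩
    · rintro y z _ _ ⟨s1, hs1, x1, hx1, he1⟩ ⟨s2, hs2, x2, hx2, he2⟩
      refine ⟨s1 * s2, mul_ne_zero hs1 hs2, ιA s2 * x1 + ιA s1 * x2,
        Ideal.add_mem _ (J.mul_mem_left _ hx1) (J.mul_mem_left _ hx2), ?_⟩
      rw [RingHom.map_add φ, RingHom.map_mul φ, RingHom.map_mul φ, he1, he2, RingHom.map_mul ιB]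
      rw [show φ (ιA s2) = ιB s2 from rfl, show φ (ιA s1) = ιB s1 from rfl]
      ring
    · rintro b y _ ⟨s, hs, x, hx, he⟩
      obtain ⟨t, ht, a, ha⟩ := hdenB b
      refine ⟨t * s, mul_ne_zero ht hs, a * x, J.mul_mem_left _ hx, ?_⟩
      rw [RingHom.map_mul φ, ha, he, RingHom.map_mul ιB, smul_eq_mul]
      ring
  have hpull' : ∀ (J : Ideal (HypRingR O f')) (c : HypRingR O f'),
      φ c ∈ J.map φ → ∃ s : O, s ≠ 0 ∧ ιA s * c ∈ J := by
    intro J c hc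
    obtain ⟨s, hs, x, hxJ, hx⟩ := hpull J (φ c) hc
    have heq : φ x = φ (ιA s * c) := by
      rw [hx, RingHom.map_mul φ, show φ (ιA s) = ιB s from rfl]
    rw [hφinj heq] at hxJ
    exact ⟨s, hs, hxJ⟩
  -- Step: I * N = span {d}
  obtain ⟨u, hu⟩ := hinv
  have hIv : (I : FractionalIdeal (HypRingR O f')⁰ (FractionRing (HypRingR O f'))) * ↑u⁻¹
      = 1 := by rw [← hu]; exact u.mul_inv
  obtain ⟨d, N, hd, hvN⟩ := exists_eq_spanSingleton_mul
    (↑u⁻¹ : FractionalIdeal (HypRingR O f')⁰ (FractionRing (HypRingR O f')))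
  have hιd : algebraMap (HypRingR O f') (FractionRing (HypRingR O f')) d ≠ 0 :=
    fun h => hd (IsFractionRing.injective _ _ (by rw [h, RingHom.map_zero]))
  have h3 : spanSingleton (HypRingR O f')⁰
        (algebraMap (HypRingR O f') (FractionRing (HypRingR O f')) d)
      * spanSingleton (HypRingR O f')⁰
        (algebraMap (HypRingR O f') (FractionRing (HypRingR O f')) d)⁻¹ = 1 := by
    rw [spanSingleton_mul_spanSingleton, mul_inv_cancel₀ hιd, spanSingleton_one]
  have key : (I : FractionalIdeal (HypRingR O f')⁰ (FractionRing (HypRingR O f'))) * ↑N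
      = spanSingleton (HypRingR O f')⁰
          (algebraMap (HypRingR O f') (FractionRing (HypRingR O f')) d) := by
    calc (I : FractionalIdeal (HypRingR O f')⁰ (FractionRing (HypRingR O f'))) * ↑N
        = (spanSingleton _ (algebraMap _ _ d) * spanSingleton _ (algebraMap _ _ d)⁻¹)
          * ((I : FractionalIdeal _ _) * ↑N) := by rw [h3, one_mul]
      _ = spanSingleton _ (algebraMap _ _ d)
          * ((I : FractionalIdeal _ _) * (spanSingleton _ (algebraMap _ _ d)⁻¹ * ↑N)) := by
            ring
      _ = spanSingleton _ (algebraMap _ _ d) * ((I : FractionalIdeal _ _) * ↑u⁻¹) := by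
            rw [← hvN]
      _ = spanSingleton _ (algebraMap _ _ d) := by rw [hIv, mul_one]
  have hIN : I * N = Ideal.span {d} := by
    have hcoe : ((I * N : Ideal (HypRingR O f')) :
        FractionalIdeal (HypRingR O f')⁰ (FractionRing (HypRingR O f')))
        = ((Ideal.span {d} : Ideal (HypRingR O f')) :
          FractionalIdeal (HypRingR O f')⁰ (FractionRing (HypRingR O f'))) := by
      rw [coeIdeal_mul, key, coeIdeal_span_singleton]
    exact FractionalIdeal.coeIdeal_injective (K := FractionRing (HypRingR O f')) hcoe
  obtain ⟨β, hβ⟩ := hprinc.principal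
  have hβ' : I.map φ = Ideal.span {β} := by rw [hβ, Ideal.submodule_span_eq]
  have hdmem : d ∈ I * N := hIN.symm ▸ (Ideal.subset_span rfl)
  have hdI : d ∈ I := Ideal.mul_le_left hdmem
  have hβne : β ≠ 0 := by
    rintro rfl
    have hmem : φ d ∈ I.map φ := Ideal.mem_map_of_mem φ hdI
    rw [hβ', Ideal.span_singleton_eq_bot.mpr rfl] at hmem
    exact hd (hφinj (by rw [Ideal.mem_bot.mp hmem, RingHom.map_zero]))
  obtain ⟨t, ht, c, hc⟩ := hdenB β
  have hcne : c ≠ 0 := by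
    rintro rfl
    rw [RingHom.map_zero] at hc
    rcases mul_eq_zero.mp hc.symm with h | h
    · exact hιB0 t ht h
    · exact hβne h
  set J : Ideal (HypRingR O f') := Ideal.span {ιA t} * I with hJdef
  have hJmap : J.map φ = Ideal.span {φ c} := by
    rw [hJdef, Ideal.map_mul, Ideal.map_span, Set.image_singleton, hβ',
      Ideal.span_singleton_mul_span_singleton]
    rw [show φ (ιA t) = ιB t from rfl, ← hc]
  have hJN : J * N = Ideal.span {ιA t * d} := by
    rw [hJdef, mul_assoc, hIN, Ideal.span_singleton_mul_span_singleton]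
  have hd0ne : ιA t * d ≠ 0 := mul_ne_zero (hιA0 t ht) hd
  have hcJ : φ c ∈ J.map φ := by rw [hJmap]; exact Ideal.subset_span rfl
  obtain ⟨s, hs, hscJ⟩ := hpull' J c hcJ
  have hscne : ιA s * c ≠ 0 := mul_ne_zero (hιA0 s hs) hcne
  have hTle : Ideal.span {ιA s * c} * N ≤ Ideal.span {ιA t * d} := by
    rw [← hJN]
    exact Ideal.mul_mono_left (Ideal.span_le.mpr (Set.singleton_subset_iff.mpr hscJ))
  set M := (Ideal.span {ιA s * c} * N).colon (Ideal.span {ιA t * d}) with hMdef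
  have hM : Ideal.span {ιA t * d} * M = Ideal.span {ιA s * c} * N := span_colon_eq hTle
  have hJM : J * M = Ideal.span {ιA s * c} := by
    apply spanCancel hd0ne
    calc Ideal.span {ιA t * d} * (J * M)
        = J * (Ideal.span {ιA t * d} * M) := by ring
      _ = J * (Ideal.span {ιA s * c} * N) := by rw [hM]
      _ = Ideal.span {ιA s * c} * (J * N) := by ring
      _ = Ideal.span {ιA s * c} * Ideal.span {ιA t * d} := by rw [hJN]
      _ = Ideal.span {ιA t * d} * Ideal.span {ιA s * c} := by ring
  have hφcne : φ c ≠ 0 := fun h => hcne (hφinj (by rw [h, RingHom.map_zero]))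
  have hMmap : M.map φ = Ideal.span {ιB s} := by
    apply spanCancel hφcne
    have h1 : (J * M).map φ = Ideal.span {φ (ιA s * c)} := by
      rw [hJM, Ideal.map_span, Set.image_singleton]
    rw [Ideal.map_mul, hJmap] at h1
    rw [h1, Ideal.span_singleton_mul_span_singleton, RingHom.map_mul φ,
      show φ (ιA s) = ιB s from rfl, mul_comm]
  have hMtop : M.map φ = ⊤ := by
    rw [hMmap, Ideal.span_singleton_eq_top.mpr (hιBunit s hs)]
  have h1M : φ 1 ∈ M.map φ := by rw [hMtop]; trivial
  obtain ⟨r, hr, hrM⟩ := hpull' M 1 h1M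
  rw [mul_one] at hrM
  have hTle2 : Ideal.span {ιA r} * J ≤ Ideal.span {ιA s * c} := by
    rw [← hJM, mul_comm J M]
    exact Ideal.mul_mono_left (Ideal.span_le.mpr (Set.singleton_subset_iff.mpr hrM))
  set Q := (Ideal.span {ιA r} * J).colon (Ideal.span {ιA s * c}) with hQdef
  have hQ : Ideal.span {ιA s * c} * Q = Ideal.span {ιA r} * J := span_colon_eq hTle2
  have hMQ : M * Q = Ideal.span {ιA r} := by
    apply spanCancel hscne
    calc Ideal.span {ιA s * c} * (M * Q)
        = M * (Ideal.span {ιA s * c} * Q) := by ring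
      _ = M * (Ideal.span {ιA r} * J) := by rw [hQ]
      _ = Ideal.span {ιA r} * (J * M) := by ring
      _ = Ideal.span {ιA r} * Ideal.span {ιA s * c} := by rw [hJM]
      _ = Ideal.span {ιA s * c} * Ideal.span {ιA r} := by ring
  have hMprin : M.IsPrincipal := by
    by_cases hru : IsUnit r
    · exact engine 0 (by simp) (ιA r) (hru.map ιA) M Q
        (by simpa using hMQ)
    · obtain ⟨fs, hfs, hassoc⟩ := UniqueFactorizationMonoid.exists_prime_factors r hr
      obtain ⟨v, hv⟩ := hassoc
      have hprimes : ∀ p ∈ fs.map ιA, Prime p := by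
        intro p hp
        obtain ⟨π, hπ, rfl⟩ := Multiset.mem_map.mp hp
        exact prime_iotaA f' hmonic hodd (hfs π hπ)
      have hfact : ιA r = ιA ↑v * (fs.map ιA).prod := by
        rw [← hv, RingHom.map_mul ιA, map_multiset_prod]
        ring
      refine engine (fs.map ιA) hprimes (ιA ↑v) (v.isUnit.map ιA) M Q ?_
      rw [hMQ, hfact]
  obtain ⟨m, hm⟩ := hMprin.principal
  rw [Ideal.submodule_span_eq] at hm
  have hmne : m ≠ 0 := by
    rintro rfl
    have h0 := hJM
    rw [hm, Ideal.span_singleton_eq_bot.mpr rfl, Ideal.mul_bot] at h0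
    exact hscne (Ideal.span_singleton_eq_bot.mp h0.symm)
  have hJm : J * Ideal.span {m} = Ideal.span {ιA s * c} := by rw [← hm, hJM]
  have hscmem : ιA s * c ∈ Ideal.span {m} * J := by
    rw [mul_comm, hJm]; exact Ideal.subset_span rfl
  obtain ⟨e, heJ, hme⟩ := Ideal.mem_span_singleton_mul.mp hscmem
  have hJe : J = Ideal.span {e} := by
    apply spanCancel hmne
    rw [mul_comm (Ideal.span {m}) J, hJm, Ideal.span_singleton_mul_span_singleton, hme]
  have heJ2 : e ∈ Ideal.span {ιA t} * I := by
    rw [← hJdef, hJe]; exact Ideal.subset_span rfl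
  obtain ⟨i0, hi0I, hti0⟩ := Ideal.mem_span_singleton_mul.mp heJ2
  have hfin : Ideal.span {ιA t} * I = Ideal.span {ιA t} * Ideal.span {i0} := by
    rw [← hJdef, hJe, ← hti0, Ideal.span_singleton_mul_span_singleton]
  have hI : I = Ideal.span {i0} := spanCancel (hιA0 t ht) hfin
  exact ⟨i0, by rw [hI, Ideal.submodule_span_eq]⟩

/-- **Injectivity of the restriction to the generic fibre `Pic(A) → Pic(B)`.**
`K` a number field, `S` a finite set of primes with `O = O_{K,S}` a PID,
`f ∈ O_K[X]` monic squarefree of odd degree `≥ 3`. Let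
`A := O[X][Y]/⟨Y² − f⟩` and `B := K[X][Y]/⟨Y² − f⟩`. If an ideal `I` of `A`
which is invertible as a fractional ideal of `A` becomes principal in `B`,
then `I` is already principal. -/
theorem restriction_to_generic_fibre_injective
    (K : Type*) [Field K] [NumberField K]
    (S : Finset (HeightOneSpectrum (𝓞 K)))
    (hPID : IsPrincipalIdealRing (SInt K S))
    (f : Polynomial (𝓞 K)) (hmonic : f.Monic) (hsqfree : Squarefree f)
    (hodd : Odd f.natDegree) (hdeg : 3 ≤ f.natDegree)
    (I : Ideal (HypRingR (SInt K S) (f.map (algebraMap (𝓞 K) (SInt K S)))))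
    (hinv : IsUnit (I : FractionalIdeal
        (HypRingR (SInt K S) (f.map (algebraMap (𝓞 K) (SInt K S))))⁰
        (FractionRing (HypRingR (SInt K S) (f.map (algebraMap (𝓞 K) (SInt K S)))))))
    (hprinc : (I.map (HypMap (SInt K S) K (algebraMap (SInt K S) K)
        (f.map (algebraMap (𝓞 K) (SInt K S))))).IsPrincipal) :
    I.IsPrincipal := by
  letI := hPID
  have hinj : Function.Injective (algebraMap (SInt K S) K) := fun a b h => Subtype.ext h
  have hden : ∀ x : K, ∃ t : SInt K S, t ≠ 0 ∧ ∃ y : SInt K S,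
      algebraMap (SInt K S) K y = algebraMap (SInt K S) K t * x := by
    intro x
    obtain ⟨⟨a, b⟩, hab⟩ := IsLocalization.surj (𝓞 K)⁰ x
    refine ⟨algebraMap (𝓞 K) (SInt K S) b, ?_, algebraMap (𝓞 K) (SInt K S) a, ?_⟩
    · intro h0
      have hb0 : algebraMap (𝓞 K) K b = 0 := by
        rw [IsScalarTower.algebraMap_apply (𝓞 K) (SInt K S) K, h0, RingHom.map_zero]
      exact nonZeroDivisors.ne_zero b.2
        (IsFractionRing.injective (𝓞 K) K (by rw [hb0, RingHom.map_zero]))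
    · rw [← IsScalarTower.algebraMap_apply, ← IsScalarTower.algebraMap_apply, ← hab]
      ring
  exact main_generic (SInt K S) K hinj hden (f.map (algebraMap (𝓞 K) (SInt K S)))
    (hmonic.map _) (by rwa [hmonic.natDegree_map]) I hinv hprinc
end

section
/- Let K be a number field, S a finite set of nonzero prime ideals of O_K such that O := O_{K,S} is a principal ideal domain, and f ∈ O_K[X] monic, squarefree, of odd degree at least 3. Let A₀, B₀, C₀ ∈ O[X] satisfy B₀² − A₀C₀ = f, with [A₀, 2B₀, C₀] primitive over O[X]. Then there exists α ∈ O such that the polynomial A₀α² + 2B₀α + C₀, regarded in K[X], is coprime to f; consequently, applying the determinant-1 matrix (α, −1; 1, 0), the form [A₀, 2B₀, C₀] is GL₂ᵗʷ-equivalent over O[X] to a form [A, 2B, C] with coefficients in O[X] whose first coefficient A is coprime to f in K[X]. -/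
open Polynomial IsDedekindDomain NumberField

lemma bad_set_finite {K : Type*} [Field K] (a b c q : K[X]) (hq : Prime q)
    (h : ¬ (q ∣ a ∧ q ∣ b ∧ q ∣ c)) :
    {x : K | q ∣ (a * C x ^ 2 + b * C x + c)}.Finite := by
  haveI : (Ideal.span {q}).IsPrime := (Ideal.span_singleton_prime hq.ne_zero).mpr hq
  haveI : Nontrivial (K[X] ⧸ Ideal.span {q}) :=
    Ideal.Quotient.nontrivial_iff.mpr (Ideal.span_singleton_ne_top hq.not_unit)
  set π := Ideal.Quotient.mk (Ideal.span {q}) with hπ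
  have hdvd : ∀ r : K[X], q ∣ r ↔ π r = 0 := fun r => by
    rw [Ideal.Quotient.eq_zero_iff_mem, Ideal.mem_span_singleton]
  set P : (K[X] ⧸ Ideal.span {q})[X] :=
    Polynomial.C (π a) * X ^ 2 + Polynomial.C (π b) * X + Polynomial.C (π c) with hP
  have hPne : P ≠ 0 := by
    intro h0
    apply h
    refine ⟨(hdvd a).2 ?_, (hdvd b).2 ?_, (hdvd c).2 ?_⟩
    · have := congrArg (fun r => Polynomial.coeff r 2) h0
      simpa [hP, coeff_X, mul_zero, add_zero, zero_add, mul_one] using this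
    · have := congrArg (fun r => Polynomial.coeff r 1) h0
      simpa [hP, coeff_X, mul_zero, add_zero, zero_add, mul_one] using this
    · have := congrArg (fun r => Polynomial.coeff r 0) h0
      simpa [hP, coeff_X, mul_zero, add_zero, zero_add, mul_one] using this
  have hinj : Function.Injective (fun x : K => π (Polynomial.C x)) :=
    (π.comp (Polynomial.C : K →+* K[X])).injective
  refine Set.Finite.subset (((finite_setOf_isRoot hPne).preimage hinj.injOn)) ?_
  intro x hx
  simp only [Set.mem_setOf_eq] at hx
  have h0 : π (a * C x ^ 2 + b * C x + c) = 0 := (hdvd _).1 hx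
  show P.IsRoot (π (Polynomial.C x))
  unfold IsRoot
  rw [hP]
  simp only [eval_add, eval_mul, eval_pow, eval_C, eval_X]
  rw [← h0, map_add, map_add, map_mul, map_mul, map_pow]

/-- **Integral representative with first coefficient coprime to `f`.**
`K` a number field, `S` a finite set of primes with `O = O_{K,S}` a PID,
`f ∈ O_K[X]` monic squarefree of odd degree `≥ 3`. Every primitive form
`[A₀, 2B₀, C₀]` over `O[X]` with `B₀² − A₀C₀ = f` admits `α ∈ O` such that
`A := A₀α² + 2B₀α + C₀` is coprime to `f` in `K[X]`; applying the
determinant-one matrix `(α, −1; 1, 0)` then gives an equivalent form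
`[A, 2B, C]` over `O[X]` whose first coefficient is `A`. -/
theorem exists_integral_rep_coprime_to_f
    (K : Type*) [Field K] [NumberField K]
    (S : Finset (HeightOneSpectrum (𝓞 K)))
    (hPID : IsPrincipalIdealRing (SInt K S))
    (f : Polynomial (𝓞 K)) (hmonic : f.Monic) (hsqfree : Squarefree f)
    (hodd : Odd f.natDegree) (hdeg : 3 ≤ f.natDegree)
    (A₀ B₀ C₀ : Polynomial (SInt K S))
    (hrel : B₀ ^ 2 - A₀ * C₀ = f.map (algebraMap (𝓞 K) (SInt K S)))
    (hprim : Ideal.span {A₀, 2 * B₀, C₀} = (⊤ : Ideal (Polynomial (SInt K S)))) :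
    ∃ α : SInt K S,
      IsCoprime ((A₀ * C α ^ 2 + 2 * B₀ * C α + C₀).map (algebraMap (SInt K S) K))
        (f.map (algebraMap (𝓞 K) K)) ∧
      ∃ B C' : Polynomial (SInt K S),
        ∀ x y : Polynomial (SInt K S),
          (A₀ * C α ^ 2 + 2 * B₀ * C α + C₀) * x ^ 2 + 2 * B * x * y + C' * y ^ 2 =
            A₀ * (C α * x - y) ^ 2 + 2 * B₀ * (C α * x - y) * x + C₀ * x ^ 2 := by
  classical
  set O := SInt K S
  set σ : O →+* K := algebraMap O K with hσ
  have hσinj : Function.Injective σ := Subtype.val_injective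
  set A' := A₀.map σ with hA'
  set B' := (2 * B₀).map σ with hB'
  set C'' := C₀.map σ with hC''
  set F := f.map (algebraMap (𝓞 K) K) with hF
  have hF0 : F ≠ 0 := (hmonic.map (algebraMap (𝓞 K) K)).ne_zero
  -- primitivity over K[X]
  have hprimK : Ideal.span ({A', B', C''} : Set K[X]) = ⊤ := by
    have := congrArg (Ideal.map (mapRingHom σ)) hprim
    rwa [Ideal.map_top, Ideal.map_span, Set.image_insert_eq, Set.image_insert_eq,
      Set.image_singleton] at this
  -- the finite bad set
  set T : Set K := ⋃ q ∈ (UniqueFactorizationMonoid.normalizedFactors F).toFinset,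
      {x : K | q ∣ (A' * C x ^ 2 + B' * C x + C'')} with hT
  have hTfin : T.Finite := by
    refine Set.Finite.biUnion (Multiset.finite_toSet _) ?_
    intro q hqmem
    have hq : Prime q := UniqueFactorizationMonoid.prime_of_normalized_factor q
      (Multiset.mem_toFinset.mp hqmem)
    refine bad_set_finite _ _ _ _ hq ?_
    rintro ⟨h1, h2, h3⟩
    have hle : Ideal.span ({A', B', C''} : Set K[X]) ≤ Ideal.span {q} := by
      rw [Ideal.span_le]
      rintro r (rfl | rfl | rfl) <;> simpa [Ideal.mem_span_singleton]
    rw [hprimK, top_le_iff] at hle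
    exact Ideal.span_singleton_ne_top hq.not_unit hle
  -- choose α avoiding the bad set
  have hpre : (σ ⁻¹' T).Finite := hTfin.preimage hσinj.injOn
  haveI : Infinite O := Infinite.of_injective (fun n : ℕ => (n : O)) (fun m n h => by
    have := congrArg σ h
    simp only [map_natCast] at this
    exact_mod_cast this)
  obtain ⟨α, hα⟩ := hpre.infinite_compl.nonempty
  refine ⟨α, ?_, -(A₀ * C α + B₀), A₀, fun x y => by ring⟩
  -- coprimality
  have hmapA : (A₀ * C α ^ 2 + 2 * B₀ * C α + C₀).map σ
      = A' * C (σ α) ^ 2 + B' * C (σ α) + C'' := by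
    simp [hA', hB', hC'', Polynomial.map_add, Polynomial.map_mul, Polynomial.map_pow,
      Polynomial.map_ofNat, map_C]
  rw [hmapA]
  by_contra hcop
  have h1 : (1 : K[X]) ∉ Ideal.span ({A' * C (σ α) ^ 2 + B' * C (σ α) + C'', F} : Set K[X]) := by
    intro h1
    obtain ⟨u, v, huv⟩ := Ideal.mem_span_pair.mp h1
    exact hcop ⟨u, v, huv⟩
  have hne : Ideal.span ({A' * C (σ α) ^ 2 + B' * C (σ α) + C'', F} : Set K[X]) ≠ ⊤ := by
    intro h; exact h1 (h ▸ Submodule.mem_top)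
  obtain ⟨m, hmmax, hle⟩ := Ideal.exists_le_maximal _ hne
  obtain ⟨p, hp⟩ := (IsPrincipalIdealRing.principal m).principal
  rw [Ideal.submodule_span_eq] at hp
  have hpA : p ∣ A' * C (σ α) ^ 2 + B' * C (σ α) + C'' := by
    rw [← Ideal.mem_span_singleton, ← hp]
    exact hle (Ideal.subset_span (by simp))
  have hpF : p ∣ F := by
    rw [← Ideal.mem_span_singleton, ← hp]
    exact hle (Ideal.subset_span (by simp))
  have hp0 : p ≠ 0 := by rintro rfl; exact hF0 (zero_dvd_iff.mp hpF)
  have hpprime : Prime p := by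
    rw [← Ideal.span_singleton_prime hp0, ← hp]
    exact hmmax.isPrime
  obtain ⟨q, hqmem, hassoc⟩ :=
    UniqueFactorizationMonoid.exists_mem_normalizedFactors_of_dvd hF0 hpprime.irreducible hpF
  have hqA : q ∣ A' * C (σ α) ^ 2 + B' * C (σ α) + C'' := (hassoc.symm.dvd).trans hpA
  have : σ α ∈ T := by
    rw [hT]
    exact Set.mem_biUnion (Multiset.mem_toFinset.mpr hqmem) hqA
  exact hα this
end

section
/- (Principal Genus Specialization Theorem.) Let K be a number field, f ∈ O_K[X] monic squarefree of odd degree at least 3, and S a finite set of nonzero primes of O_K such that O := O_{K,S} is a PID. Let A, B, C ∈ O[X] with B² − A·C = f, [A,2B,C] primitive over O[X], and A coprime to f in K[X]. Let n ∈ O with f(n) ≠ 0. Assume that for every unit ε ∈ Oˣ there exist a root ρ_ε of f in a fixed algebraic closure K̄ of K and a nonzero prime ideal 𝔭_ε of the ring of integers of K(ρ_ε) such that: (i) 𝔭_ε does not lie above any prime of S; (ii) ε·A(ρ_ε) is not a square in K(ρ_ε) and its residue modulo 𝔭_ε is a nonzero nonsquare in the residue field (equivalently, 𝔭_ε is inert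 in the quadratic extension K(ρ_ε, √(ε·A(ρ_ε)))/K(ρ_ε)); (iii) n ≡ ρ_ε (mod 𝔭_ε), i.e. n − ρ_ε has positive 𝔭_ε-adic valuation. Then the specialized form [A(n), 2B(n), C(n)] is not in the principal genus over O: for all x, y, s ∈ O and every ε' ∈ Oˣ, if A(n)x² + 2B(n)xy + C(n)y² is invertible modulo f(n)·O, then f(n) does not divide A(n)x² + 2B(n)xy + C(n)y² − ε'·s². In particular, [A(n),2B(n),C(n)] is not GL₂ᵗʷ-equivalent over O to the principal form [1, 0, −f(n)]. -/
open Polynomial IntermediateField IsDedekindDomain NumberField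

set_option maxHeartbeats 4000000
set_option synthInstance.maxHeartbeats 1000000

/-- `O_{K,S}` acts on any intermediate field of `K̄/K` through `K`. -/
noncomputable instance (K : Type*) [Field K] [NumberField K]
    (S : Finset (HeightOneSpectrum (𝓞 K))) (L : IntermediateField K (AlgebraicClosure K)) :
    Algebra (SInt K S) L :=
  ((algebraMap K L).comp (algebraMap (SInt K S) K)).toAlgebra

/-- Abstract bridge: if `c² ≡ e·A(n) mod f(n)` in `O`, and `n ≡ r mod 𝔭` with
`f(r) = 0` (detected through an injective map `j` into a bigger ring where `w`
equals `e·A(g)`), then `w` is a square mod `𝔭`. -/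
lemma bridge_abstract {O R L : Type*} [CommRing O] [CommRing R] [CommRing L]
    (φ : O →+* R) (j : R →+* L) (hinj : Function.Injective j)
    (𝔭 : Ideal R) (w r : R) (g : L) (hr : j r = g)
    (A fO : Polynomial O) (n e c : O)
    (hf0 : fO.eval₂ (j.comp φ) g = 0)
    (hw : j w = (j.comp φ) e * A.eval₂ (j.comp φ) g)
    (hnr : Ideal.Quotient.mk 𝔭 (φ n - r) = 0)
    (hdvd : fO.eval n ∣ c ^ 2 - e * A.eval n) :
    ∃ t : R, (Ideal.Quotient.mk 𝔭 t) ^ 2 = Ideal.Quotient.mk 𝔭 w := by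
  set mkq := Ideal.Quotient.mk 𝔭 with hmkq
  have h𝔭n : mkq (φ n) = mkq r := sub_eq_zero.mp (by rwa [map_sub] at hnr)
  have hev : ∀ P : Polynomial O, mkq (φ (P.eval n)) = mkq (P.eval₂ φ r) := by
    intro P
    calc mkq (φ (P.eval n)) = (mkq.comp φ) (P.eval n) := rfl
      _ = P.eval₂ (mkq.comp φ) ((mkq.comp φ) n) := (eval₂_hom _ _).symm
      _ = P.eval₂ (mkq.comp φ) (mkq r) := by
          rw [show (mkq.comp φ) n = mkq (φ n) from rfl, h𝔭n]
      _ = mkq (P.eval₂ φ r) := (hom_eval₂ _ _ _ _).symm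
  have hfr : fO.eval₂ φ r = 0 := by
    apply hinj
    rw [hom_eval₂, hr, hf0, map_zero]
  have hfn0 : mkq (φ (fO.eval n)) = 0 := by rw [hev fO, hfr, map_zero]
  have hwr : w = φ e * A.eval₂ φ r := by
    apply hinj
    rw [map_mul, hw, hom_eval₂, hr]
    rfl
  obtain ⟨k, hk⟩ := hdvd
  refine ⟨φ c, ?_⟩
  have hc2 : c ^ 2 = e * A.eval n + fO.eval n * k := by linear_combination hk
  calc (mkq (φ c)) ^ 2 = mkq (φ (c ^ 2)) := by rw [map_pow, map_pow]
    _ = mkq (φ (e * A.eval n)) + mkq (φ (fO.eval n)) * mkq (φ k) := by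
        rw [hc2]; simp [map_add, map_mul]
    _ = mkq (φ e) * mkq (φ (A.eval n)) := by rw [hfn0, zero_mul, add_zero, map_mul, map_mul]
    _ = mkq (φ e) * mkq (A.eval₂ φ r) := by rw [hev A]
    _ = mkq w := by rw [← map_mul, ← hwr]

/-- Purely computational square manipulation in a commutative ring. -/
lemma sq_unit_aux {Q : Type*} [CommRing Q] (a q u e s v : Q)
    (E1 : q = e * s ^ 2) (E2 : q * v = 1) (E3 : a * q = u ^ 2) :
    (e * s * u * v) ^ 2 = e * a := by
  calc (e * s * u * v) ^ 2 = e ^ 2 * s ^ 2 * u ^ 2 * v ^ 2 := by ring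
    _ = e ^ 2 * s ^ 2 * (a * q) * v ^ 2 := by rw [E3]
    _ = e * (e * s ^ 2) * a * q * v ^ 2 := by ring
    _ = e * q * a * q * v ^ 2 := by rw [← E1]
    _ = e * a * (q * v) ^ 2 := by ring
    _ = e * a := by rw [E2]; ring

/-- **Principal Genus Specialization Theorem.**
`K` a number field, `f ∈ O_K[X]` monic squarefree of odd degree `≥ 3`, `S` a
finite set of primes with `O = O_{K,S}` a PID. Let `[A,2B,C]` be a primitive
form over `O[X]` with `B² − AC = f` and `A` coprime to `f` in `K[X]`, and let
`n ∈ O` with `f(n) ≠ 0`. Suppose that for every `ε ∈ Oˣ` there are a root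
`ρ_ε` of `f` in `K̄` and a nonzero prime `𝔭_ε` of the ring of `S_ε`-integers of
`K(ρ_ε)` (the integral closure of `O` in `K(ρ_ε)`, whose primes are exactly the
primes of `K(ρ_ε)` not lying above `S`) such that `ε·A(ρ_ε)` is not a square in
`K(ρ_ε)`, its residue mod `𝔭_ε` is a nonzero nonsquare, and `n ≡ ρ_ε (mod 𝔭_ε)`.
Then `[A(n), 2B(n), C(n)]` is not in the principal genus over `O`: no value
`A(n)x² + 2B(n)xy + C(n)y²` which is invertible mod `f(n)` is congruent to
`ε'·s²` mod `f(n)`; in particular `[A(n),2B(n),C(n)]` is not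
`GL₂ᵗʷ`-equivalent over `O` to `[1, 0, −f(n)]`. -/
theorem principal_genus_specialization
    (K : Type*) [Field K] [NumberField K]
    (S : Finset (HeightOneSpectrum (𝓞 K)))
    (hPID : IsPrincipalIdealRing (SInt K S))
    (f : Polynomial (𝓞 K)) (hmonic : f.Monic) (hsqfree : Squarefree f)
    (hodd : Odd f.natDegree) (hdeg : 3 ≤ f.natDegree)
    (A B C : Polynomial (SInt K S))
    (hrel : B ^ 2 - A * C = f.map (algebraMap (𝓞 K) (SInt K S)))
    (hprim : Ideal.span {A, 2 * B, C} = (⊤ : Ideal (Polynomial (SInt K S))))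
    (hcop : IsCoprime (A.map (algebraMap (SInt K S) K)) (f.map (algebraMap (𝓞 K) K)))
    (n : SInt K S)
    (hfn : (f.map (algebraMap (𝓞 K) (SInt K S))).eval n ≠ 0)
    (hhyp : ∀ ε : (SInt K S)ˣ, ∃ ρ : AlgebraicClosure K,
      aeval ρ (f.map (algebraMap (𝓞 K) K)) = 0 ∧
      -- `ε·A(ρ)` is not a square in `K(ρ)`
      (¬ ∃ z : K⟮ρ⟯, z ^ 2 =
          algebraMap (SInt K S) K⟮ρ⟯ (ε : SInt K S) * aeval (AdjoinSimple.gen K ρ) A) ∧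
      -- there is a nonzero prime `𝔭` of the `S_ε`-integers of `K(ρ)` ...
      ∃ 𝔭 : Ideal (integralClosure (SInt K S) K⟮ρ⟯),
        𝔭.IsPrime ∧ 𝔭 ≠ ⊥ ∧ 𝔭 ≠ ⊤ ∧
        -- ... such that the residue of `ε·A(ρ)` mod `𝔭` is a nonzero nonsquare ...
        (∃ w : integralClosure (SInt K S) K⟮ρ⟯,
          algebraMap (integralClosure (SInt K S) K⟮ρ⟯) K⟮ρ⟯ w =
            algebraMap (SInt K S) K⟮ρ⟯ (ε : SInt K S) * aeval (AdjoinSimple.gen K ρ) A ∧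
          Ideal.Quotient.mk 𝔭 w ≠ 0 ∧
          ¬ ∃ t : integralClosure (SInt K S) K⟮ρ⟯,
            (Ideal.Quotient.mk 𝔭 t) ^ 2 = Ideal.Quotient.mk 𝔭 w) ∧
        -- ... and `n ≡ ρ (mod 𝔭)`
        (∃ r : integralClosure (SInt K S) K⟮ρ⟯,
          algebraMap (integralClosure (SInt K S) K⟮ρ⟯) K⟮ρ⟯ r = AdjoinSimple.gen K ρ ∧
          Ideal.Quotient.mk 𝔭
            (algebraMap (SInt K S) (integralClosure (SInt K S) K⟮ρ⟯) n - r) = 0)) :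
    -- `[A(n), 2B(n), C(n)]` is not in the principal genus over `O` ...
    (∀ x y s : SInt K S, ∀ ε' : (SInt K S)ˣ,
      IsUnit (Ideal.Quotient.mk
          (Ideal.span {(f.map (algebraMap (𝓞 K) (SInt K S))).eval n})
          (A.eval n * x ^ 2 + 2 * B.eval n * x * y + C.eval n * y ^ 2)) →
      ¬ ((f.map (algebraMap (𝓞 K) (SInt K S))).eval n ∣
          (A.eval n * x ^ 2 + 2 * B.eval n * x * y + C.eval n * y ^ 2
            - (ε' : SInt K S) * s ^ 2))) ∧
    -- ... in particular it is not `GL₂ᵗʷ`-equivalent over `O` to `[1, 0, −f(n)]`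
    ¬ ∃ M : Matrix (Fin 2) (Fin 2) (SInt K S), IsUnit M.det ∧
        ∀ x y : SInt K S,
          M.det * (A.eval n * x ^ 2 + 2 * B.eval n * x * y + C.eval n * y ^ 2) =
            (M 0 0 * x + M 0 1 * y) ^ 2
              - (f.map (algebraMap (𝓞 K) (SInt K S))).eval n
                * (M 1 0 * x + M 1 1 * y) ^ 2 := by
  -- Main device: no `c ∈ O` satisfies `c² ≡ ε·A(n) (mod f(n))`.
  have main : ∀ ε : (SInt K S)ˣ, ∀ c : SInt K S,
      (f.map (algebraMap (𝓞 K) (SInt K S))).eval n ∣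
        c ^ 2 - (ε : SInt K S) * A.eval n → False := by
    intro ε c hdvd
    obtain ⟨ρ, h0, -, 𝔭, -, -, -, ⟨w, hw, -, hnsq⟩, ⟨r, hr, hnr⟩⟩ := hhyp ε
    apply hnsq
    have hjφ : (algebraMap (integralClosure (SInt K S) K⟮ρ⟯) K⟮ρ⟯).comp
        (algebraMap (SInt K S) (integralClosure (SInt K S) K⟮ρ⟯)) =
        algebraMap (SInt K S) K⟮ρ⟯ := (IsScalarTower.algebraMap_eq _ _ _).symm
    refine bridge_abstract (algebraMap (SInt K S) (integralClosure (SInt K S) K⟮ρ⟯))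
      (algebraMap (integralClosure (SInt K S) K⟮ρ⟯) K⟮ρ⟯) (fun a b h => Subtype.ext h)
      𝔭 w r (AdjoinSimple.gen K ρ) hr A (f.map (algebraMap (𝓞 K) (SInt K S))) n ε c
      ?_ ?_ hnr hdvd
    · -- `f` vanishes at the generator
      rw [hjφ, Polynomial.eval₂_map]
      have hcomp : (algebraMap (SInt K S) K⟮ρ⟯).comp (algebraMap (𝓞 K) (SInt K S)) =
          (algebraMap K K⟮ρ⟯).comp (algebraMap (𝓞 K) K) := by
        rw [show algebraMap (SInt K S) K⟮ρ⟯
            = (algebraMap K K⟮ρ⟯).comp (algebraMap (SInt K S) K) from rfl,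
          RingHom.comp_assoc, ← IsScalarTower.algebraMap_eq]
      rw [hcomp, ← Polynomial.eval₂_map]
      have hgen : aeval (AdjoinSimple.gen K ρ) (f.map (algebraMap (𝓞 K) K)) = 0 := by
        apply (algebraMap K⟮ρ⟯ (AlgebraicClosure K)).injective
        rw [map_zero, ← Polynomial.aeval_algebraMap_apply, AdjoinSimple.algebraMap_gen, h0]
      simpa [Polynomial.aeval_def] using hgen
    · -- identification of `w`
      rw [hjφ, hw, ← Polynomial.aeval_def]
  set fn := (f.map (algebraMap (𝓞 K) (SInt K S))).eval n with hfndef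
  have hrelₙ : (B.eval n) ^ 2 - A.eval n * C.eval n = fn := by
    have := congrArg (Polynomial.eval n) hrel
    simp only [Polynomial.eval_sub, Polynomial.eval_pow, Polynomial.eval_mul] at this
    exact this
  constructor
  · -- principal genus part
    intro x y s ε' hunit hdvd
    set q := A.eval n * x ^ 2 + 2 * B.eval n * x * y + C.eval n * y ^ 2 with hq
    set u := A.eval n * x + B.eval n * y with hu
    -- get an inverse of `q` mod `fn`
    set mkf := Ideal.Quotient.mk (Ideal.span {fn}) with hmkf
    obtain ⟨uu, huu⟩ := hunit
    obtain ⟨v, hv⟩ := Ideal.Quotient.mk_surjective ((uu⁻¹ : (SInt K S ⧸ Ideal.span {fn})ˣ) :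
      SInt K S ⧸ Ideal.span {fn})
    have hqv : mkf q * mkf v = 1 := by
      rw [hmkf] at *
      rw [hv, ← huu]
      exact uu.mul_inv
    have hfnz : mkf fn = 0 := by
      rw [hmkf, Ideal.Quotient.eq_zero_iff_mem]
      exact Ideal.subset_span rfl
    -- the three congruences
    have E1 : mkf q = mkf (ε' : SInt K S) * mkf s ^ 2 := by
      have h1 : mkf (q - (ε' : SInt K S) * s ^ 2) = 0 := by
        rw [hmkf, Ideal.Quotient.eq_zero_iff_mem, Ideal.mem_span_singleton]
        exact hdvd
      rw [map_sub, sub_eq_zero] at h1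
      rw [h1, map_mul, map_pow]
    have E3 : mkf (A.eval n) * mkf q = mkf u ^ 2 := by
      have hAq : A.eval n * q = u ^ 2 - fn * y ^ 2 := by
        rw [hq, hu]; linear_combination (-(y ^ 2)) * hrelₙ
      have := congrArg mkf hAq
      rw [map_mul] at this
      rw [this, map_sub, map_mul, hfnz, zero_mul, sub_zero, map_pow]
    -- so `(ε'·s·u·v)² ≡ ε'·A(n) mod fn`
    apply main ε' ((ε' : SInt K S) * s * u * v)
    rw [← Ideal.mem_span_singleton, ← Ideal.Quotient.eq_zero_iff_mem]
    have key : (mkf (ε' : SInt K S) * mkf s * mkf u * mkf v) ^ 2 =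
        mkf (ε' : SInt K S) * mkf (A.eval n) :=
      sq_unit_aux _ _ _ _ _ _ E1 hqv E3
    rw [show Ideal.Quotient.mk (Ideal.span {fn}) = mkf from rfl]
    rw [map_sub, sub_eq_zero, map_pow, map_mul, map_mul, map_mul, map_mul, key]
  · -- not equivalent to the principal form
    rintro ⟨M, hdet, hM⟩
    apply main hdet.unit (M 0 0)
    refine ⟨(M 1 0) ^ 2, ?_⟩
    have h10 := hM 1 0
    have hu := hdet.unit_spec
    linear_combination -h10 - A.eval n * hu
end
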